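/- arXiv:1705.05786 — 10 statements merged into one kernel-verified Lean document; each statement's English description precedes it below -/
import Mathlib

section
/- Let w be an infinite LSP word over a finite alphabet A. Then for every n ∈ ℕ, the factor complexity of w satisfies p_w(n+1) − p_w(n) ≤ #A − 1, where p_w(n) denotes the number of distinct factors of w of length n. -/
/-- `u` is a prefix of the infinite word `w`. -/
def PrefI {A : Type*} (u : List A) (w : ℕ → A) : Prop :=
  ∀ i (h : i < u.length), u[i] = w i

/-- `u` is a factor of the infinite word `w`. -/
def FactorI {A : Type*} (w : ℕ → A) (u : List A) : Prop :=
  ∃ k, ∀ i (h : i < u.length), u[i] = w (k + i)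

/-- The infinite word `w` is LSP: every left special factor of `w` is a prefix of `w`. -/
def LSPInf {A : Type*} (w : ℕ → A) : Prop :=
  ∀ (u : List A) (a b : A), a ≠ b → FactorI w (a :: u) → FactorI w (b :: u) → PrefI u w

/-- `f` is a bLSP morphism (given by its action on letters). -/
def IsBLSP {A : Type*} (f : A → List A) : Prop :=
  ∃ α, f α = [α] ∧ ∀ β, β ≠ α → ∃ γ, f β = f γ ++ [β]

/-- `v` is the image of the infinite word `w` under the non-erasing morphism `f`,
i.e. every finite concatenation `f (w 0) ++ ⋯ ++ f (w (n-1))` is a prefix of `v`. -/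
def IsImage {A B : Type*} (f : A → List B) (w : ℕ → A) (v : ℕ → B) : Prop :=
  ∀ n, PrefI (((List.range n).map w).flatMap f) v

/-- Factor complexity of an infinite word. -/
noncomputable def complexity {A : Type*} (w : ℕ → A) (n : ℕ) : ℕ :=
  {u : List A | u.length = n ∧ FactorI w u}.ncard

/-! An LSP word has at most one left special factor of each length `n`, namely its prefix of
length `n`. Every other factor `u` of length `n` extends to the left by a unique letter, while the
prefix extends by at most `#A` letters; so `p(n+1) ≤ #A + (p(n) - 1)`. -/

open Set

section

variable {A : Type*}

def IsLeftSpecialI (w : ℕ → A) (u : List A) : Prop :=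
  ∃ a b, a ≠ b ∧ FactorI w (a :: u) ∧ FactorI w (b :: u)

theorem FactorI.of_cons {w : ℕ → A} {a : A} {u : List A} (h : FactorI w (a :: u)) :
    FactorI w u := by
  obtain ⟨k, hk⟩ := h
  refine ⟨k + 1, fun i hi => ?_⟩
  have hi' : i + 1 < (a :: u).length := by simpa using hi
  rw [← List.getElem_cons_succ (a := a) (h := hi'), hk (i + 1) hi', Nat.add_right_comm,
    Nat.add_assoc]

theorem factorI_map_range (w : ℕ → A) (n : ℕ) : FactorI w ((List.range n).map w) :=
  ⟨0, fun i _ => by simp⟩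

theorem PrefI.eq_map_range {u : List A} {w : ℕ → A} (h : PrefI u w) :
    u = (List.range u.length).map w :=
  List.ext_getElem (by simp) fun i hi _ => by simp [h i hi]

theorem LSPInf.eq_map_range_of_isLeftSpecialI {w : ℕ → A} (hw : LSPInf w) {u : List A}
    (hu : IsLeftSpecialI w u) : u = (List.range u.length).map w := by
  obtain ⟨a, b, hab, ha, hb⟩ := hu
  exact (hw u a b hab ha hb).eq_map_range

theorem finite_setOf_factorI [Finite A] (w : ℕ → A) (n : ℕ) :
    {u : List A | u.length = n ∧ FactorI w u}.Finite :=
  (List.finite_length_eq A n).subset fun _ hu => hu.1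

theorem injOn_tail_of_not_isLeftSpecialI (w : ℕ → A) (n : ℕ) :
    InjOn List.tail {v : List A | v.length = n + 1 ∧ FactorI w v ∧ ¬IsLeftSpecialI w v.tail} := by
  intro v hv v' hv' htail
  obtain ⟨a, t, rfl⟩ := List.exists_cons_of_length_eq_add_one hv.1
  obtain ⟨b, t', rfl⟩ := List.exists_cons_of_length_eq_add_one hv'.1
  obtain rfl : t = t' := htail
  by_contra hne
  exact hv.2.2 ⟨a, b, fun hab => hne (hab ▸ rfl), hv.2.1, hv'.2.1⟩

theorem complexity_succ_add_one_le [Finite A] {w : ℕ → A} {n : ℕ} {u₀ : List A}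
    (hu₀ : FactorI w u₀) (hlen : u₀.length = n)
    (hspecial : ∀ u : List A, u.length = n → IsLeftSpecialI w u → u = u₀) :
    complexity w (n + 1) + 1 ≤ Nat.card A + complexity w n := by
  set S : ℕ → Set (List A) := fun m => {u | u.length = m ∧ FactorI w u}
  set T : Set (List A) := {v ∈ S (n + 1) | v.tail ≠ u₀}
  have hcover : S (n + 1) ⊆ range (· :: u₀) ∪ T := by
    intro v hv
    obtain ⟨a, t, rfl⟩ := List.exists_cons_of_length_eq_add_one hv.1
    by_cases ht : t = u₀
    · exact Or.inl ⟨a, ht ▸ rfl⟩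
    · exact Or.inr ⟨hv, ht⟩
  have hrange : (range (· :: u₀)).ncard = Nat.card A :=
    ncard_range_of_injective fun _ _ h => List.head_eq_of_cons_eq h
  have hT : T.ncard ≤ (S n \ {u₀}).ncard := by
    refine ncard_le_ncard_of_injOn List.tail ?_ ?_ (finite_setOf_factorI w n).sdiff
    · rintro v ⟨⟨hl, hv⟩, ht⟩
      obtain ⟨a, t, rfl⟩ := List.exists_cons_of_length_eq_add_one hl
      exact ⟨⟨by simpa using hl, hv.of_cons⟩, ht⟩
    · refine (injOn_tail_of_not_isLeftSpecialI w n).mono ?_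
      rintro v ⟨⟨hl, hv⟩, ht⟩
      exact ⟨hl, hv, fun hsp => ht (hspecial _ (by simp [hl]) hsp)⟩
  have hS : (S n \ {u₀}).ncard + 1 = (S n).ncard :=
    ncard_sdiff_singleton_add_one ⟨hlen, hu₀⟩ (finite_setOf_factorI w n)
  have hsplit : (S (n + 1)).ncard ≤ (range (· :: u₀)).ncard + T.ncard :=
    (ncard_le_ncard hcover ((finite_range _).union
      ((finite_setOf_factorI w (n + 1)).subset fun _ h => h.1))).trans
      (ncard_union_le _ _)
  change (S (n + 1)).ncard + 1 ≤ Nat.card A + (S n).ncard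
  omega

end

theorem lsp_complexity_increment {A : Type*} [Fintype A] (w : ℕ → A)
    (hw : LSPInf w) (n : ℕ) :
    complexity w (n + 1) - complexity w n ≤ Fintype.card A - 1 := by
  have key := complexity_succ_add_one_le (n := n) (factorI_map_range w n) (by simp)
    fun u hu hsp => (hw.eq_map_range_of_isLeftSpecialI hsp).trans (by rw [hu])
  rw [Nat.card_eq_fintype_card] at key
  omega
end

section
/- Every infinite LSP word w over a finite alphabet A is uniformly recurrent: for every factor u of w there exists N ∈ ℕ such that u is a factor of every factor of w of length N. -/
section

variable {A : Type*}

def blockAt (w : ℕ → A) (m s : ℕ) : Fin m → A := fun i => w (s + i)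

lemma blockAt_add_eq {w : ℕ → A} {m n s t i : ℕ} (h : blockAt w m s = blockAt w m t)
    (hin : i + n ≤ m) : blockAt w n (s + i) = blockAt w n (t + i) := by
  funext j
  simpa [blockAt, add_assoc] using congrFun h ⟨i + j, by omega⟩

lemma blockAt_eq_of_eq_of_succ {w : ℕ → A} {m s t : ℕ} (h₀ : w s = w t)
    (h : blockAt w m (s + 1) = blockAt w m (t + 1)) : blockAt w m s = blockAt w m t := by
  funext ⟨i, hi⟩
  rcases i with _ | j
  · simpa [blockAt] using h₀
  · simpa [blockAt, add_assoc, add_comm 1] using congrFun h ⟨j, by omega⟩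

lemma ofFn_blockAt_succ (w : ℕ → A) (m s : ℕ) :
    List.ofFn (blockAt w (m + 1) s) = w s :: List.ofFn (blockAt w m (s + 1)) := by
  rw [List.ofFn_succ]
  refine congrArg _ (congrArg List.ofFn (funext fun i => ?_))
  simp only [blockAt, Fin.val_succ]
  ac_rfl

lemma factorI_ofFn_blockAt (w : ℕ → A) (m s : ℕ) : FactorI w (List.ofFn (blockAt w m s)) :=
  ⟨s, fun i h => by simp [blockAt]⟩

lemma FactorI.exists_eq_ofFn_blockAt {w : ℕ → A} {u : List A} (hu : FactorI w u) :
    ∃ k n, u = List.ofFn (blockAt w n k) := by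
  obtain ⟨k, hk⟩ := hu
  exact ⟨k, u.length, List.ext_getElem (by simp) fun i h _ => by simp [blockAt, hk i h]⟩

lemma blockAt_eq_zero_of_prefI {w : ℕ → A} {m s : ℕ}
    (h : PrefI (List.ofFn (blockAt w m s)) w) :
    blockAt w m s = blockAt w m 0 := by
  funext ⟨i, hi⟩
  have := h i (by simpa using hi)
  rw [List.getElem_ofFn] at this
  simpa [blockAt] using this

lemma ofFn_blockAt_infix (w : ℕ → A) {n N s k : ℕ} (hks : k ≤ s) (hsk : s + n ≤ k + N) :
    List.ofFn (blockAt w n s) <:+: List.ofFn (blockAt w N k) := by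
  have h : List.ofFn (blockAt w n s) = ((List.ofFn (blockAt w N k)).drop (s - k)).take n :=
    List.ext_getElem (by simp; omega) fun i _ _ => by simp [blockAt]; congr 1; omega
  rw [h]
  exact (List.take_prefix _ _).isInfix.trans (List.drop_suffix _ _).isInfix

namespace LSPInf

variable {w : ℕ → A}

lemma eq_of_blockAt_succ_eq (hw : LSPInf w) {m s t : ℕ}
    (h : blockAt w m (s + 1) = blockAt w m (t + 1)) (hp : blockAt w m (s + 1) ≠ blockAt w m 0) :
    w s = w t := by
  by_contra hst
  refine hp (blockAt_eq_zero_of_prefI (hw _ _ _ hst ?_ ?_))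
  · simpa only [ofFn_blockAt_succ] using factorI_ofFn_blockAt w (m + 1) s
  · simpa only [ofFn_blockAt_succ, h] using factorI_ofFn_blockAt w (m + 1) t

lemma exists_prefix_between (hw : LSPInf w) {m q₁ q₂ : ℕ} (hq : q₁ < q₂)
    (h : blockAt w m q₁ = blockAt w m q₂) :
    ∃ r, q₁ ≤ r ∧ r ≤ q₂ ∧ blockAt w m r = blockAt w m 0 := by
  by_contra! hne
  have walk_left : ∀ p ≤ q₂, ∃ r, q₁ < r ∧ r ≤ q₂ ∧ blockAt w m p = blockAt w m r := by
    intro p hp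
    induction hp using Nat.decreasingInduction with
    | self => exact ⟨q₂, hq, le_rfl, rfl⟩
    | of_succ p _ ih =>
      obtain ⟨_ | r, hr₁, hr₂, hr⟩ := ih
      · omega
      have hletter := hw.eq_of_blockAt_succ_eq hr (hr ▸ hne _ (by omega) hr₂)
      rcases (Nat.le_of_lt_succ hr₁).eq_or_lt with rfl | hr₁'
      · exact ⟨q₂, hq, le_rfl, (blockAt_eq_of_eq_of_succ hletter hr).trans h⟩
      · exact ⟨r, hr₁', by omega, blockAt_eq_of_eq_of_succ hletter hr⟩
  obtain ⟨r, hr₁, hr₂, hr⟩ := walk_left 0 (Nat.zero_le _)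
  exact hne r hr₁.le hr₂ hr.symm

lemma exists_prefix_near [Fintype A] (hw : LSPInf w) (m k : ℕ) :
    ∃ s, k ≤ s ∧ s ≤ k + Fintype.card A ^ m ∧ blockAt w m s = blockAt w m 0 := by
  have hcard : Fintype.card (Fin m → A) < Fintype.card (Fin (Fintype.card A ^ m + 1)) := by
    simp
  obtain ⟨i, j, hij, h⟩ :=
    Fintype.exists_ne_map_eq_of_card_lt (fun i : Fin _ => blockAt w m (k + i)) hcard
  rcases Fin.lt_or_lt_of_ne hij with hlt | hlt
  · obtain ⟨r, hr₁, hr₂, hr⟩ := hw.exists_prefix_between (Nat.add_lt_add_left hlt k) h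
    exact ⟨r, by omega, by omega, hr⟩
  · obtain ⟨r, hr₁, hr₂, hr⟩ := hw.exists_prefix_between (Nat.add_lt_add_left hlt k) h.symm
    exact ⟨r, by omega, by omega, hr⟩

end LSPInf

end

theorem lsp_uniformly_recurrent {A : Type*} [Fintype A] (w : ℕ → A)
    (hw : LSPInf w) (u : List A) (hu : FactorI w u) :
    ∃ N : ℕ, ∀ v : List A, FactorI w v → v.length = N → u <:+: v := by
  obtain ⟨k₀, n, rfl⟩ := hu.exists_eq_ofFn_blockAt
  refine ⟨Fintype.card A ^ (k₀ + n) + (k₀ + n), fun v hv hvlen => ?_⟩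
  obtain ⟨k, N, rfl⟩ := hv.exists_eq_ofFn_blockAt
  rw [List.length_ofFn] at hvlen
  subst hvlen
  obtain ⟨s, hks, hsk, hs⟩ := hw.exists_prefix_near (k₀ + n) k
  have hocc : blockAt w n (s + k₀) = blockAt w n k₀ := by
    simpa using blockAt_add_eq hs (i := k₀) (n := n) le_rfl
  rw [← hocc]
  exact ofFn_blockAt_infix w (by omega) (by omega)
end

section
/- Let f be a bLSP morphism of A*. Then the set {f(β) : β ∈ A} is a suffix code: for any two distinct letters β, γ ∈ A, f(β) is not a suffix of f(γ). -/
theorem List.IsSuffix.getLast?_eq {α : Type*} {l₁ l₂ : List α} (h : l₁ <:+ l₂) (hl₁ : l₁ ≠ []) :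
    l₂.getLast? = l₁.getLast? := by
  obtain ⟨t, rfl⟩ := h
  exact List.getLast?_append_of_ne_nil t hl₁

theorem IsBLSP.getLast?_eq {A : Type*} {f : A → List A} (hf : IsBLSP f) (β : A) :
    (f β).getLast? = some β := by
  obtain ⟨α, hα, hext⟩ := hf
  by_cases hβ : β = α
  · rw [hβ, hα, List.getLast?_singleton]
  · obtain ⟨γ, hγ⟩ := hext β hβ
    rw [hγ, List.getLast?_concat]

theorem bLSP_suffix_code {A : Type*} (f : A → List A) (hf : IsBLSP f)
    (β γ : A) (hβγ : β ≠ γ) : ¬ f β <:+ f γ := by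
  intro hsuf
  have hne : f β ≠ [] := by
    intro h
    simpa [h] using hf.getLast?_eq β
  have hlast := hsuf.getLast?_eq hne
  rw [hf.getLast?_eq, hf.getLast?_eq] at hlast
  exact hβγ (Option.some.inj hlast).symm
end

section
/- Every bLSP morphism f of A* is injective, both as a map on finite words (from A* to A*) and as a map on infinite words (from functions ℕ → A to functions ℕ → A, where f is applied to an infinite word by concatenating the images of its letters). -/
/-!
The last letter of `f β` is `β`, so `f` is a suffix code: reading a finite image from the right
recovers the preimage letter by letter. Moreover every `f β` is `α` followed by an `α`-free word,
so in an image the occurrences of `α` mark exactly the starts of the blocks `f (w n)`; this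
decodes infinite images from the left.
-/

theorem List.flatMap_injective_of_getLast? {A B : Type*} {g : A → List B} {e : A → B}
    (he : e.Injective) (hg : ∀ a, (g a).getLast? = some (e a)) :
    Function.Injective (fun l : List A => l.flatMap g) := by
  intro l l' h
  induction l using List.reverseRecOn generalizing l' with
  | nil =>
    cases l' using List.reverseRecOn with
    | nil => rfl
    | append_singleton t' a' => simpa [List.getLast?_append, hg] using congrArg getLast? h
  | append_singleton t a ih =>
    cases l' using List.reverseRecOn with
    | nil => simpa [List.getLast?_append, hg] using congrArg getLast? h
    | append_singleton t' a' =>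
      simp only [List.flatMap_append, List.flatMap_singleton] at h
      obtain rfl : a = a' := he (by simpa [List.getLast?_append, hg] using congrArg getLast? h)
      rw [ih (List.append_cancel_right h)]

theorem List.eq_of_append_singleton_prefix {A : Type*} {s t : List A} {α : A}
    (hs : α ∉ s) (ht : α ∉ t) (h : s ++ [α] <+: t ++ [α]) : s = t := by
  classical
  obtain ⟨r, hr⟩ := h
  have takeWhile_ne : ∀ u : List A, α ∉ u → ∀ r',
      (u ++ [α] ++ r').takeWhile (fun x => decide (x ≠ α)) = u := by
    intro u hu r'
    rw [List.append_assoc, List.takeWhile_append_of_pos]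
    · simp
    · intro a ha
      simpa using fun h : a = α => hu (h ▸ ha)
  have := congrArg (List.takeWhile fun x => decide (x ≠ α)) hr
  rwa [takeWhile_ne s hs, ← List.append_nil (t ++ [α]), takeWhile_ne t ht] at this

section PrefI

variable {A : Type*} {x y : List A} {v : ℕ → A}

theorem PrefI.of_prefix (hy : PrefI y v) (h : x <+: y) : PrefI x v := by
  obtain ⟨r, rfl⟩ := h
  intro i hi
  rw [← hy i (by simp; omega), List.getElem_append_left]

theorem PrefI.prefix_of_length_le (hx : PrefI x v) (hy : PrefI y v)
    (hle : x.length ≤ y.length) : x <+: y := by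
  rw [List.prefix_iff_eq_take]
  refine List.ext_getElem (by simp [hle]) fun i h₁ h₂ => ?_
  rw [List.getElem_take, hx i h₁, hy i (by omega)]

theorem PrefI.prefix_or_prefix (hx : PrefI x v) (hy : PrefI y v) : x <+: y ∨ y <+: x :=
  (le_total x.length y.length).imp (hx.prefix_of_length_le hy) (hy.prefix_of_length_le hx)

end PrefI

namespace IsBLSP

variable {A : Type*} {f : A → List A} {α : A}

theorem getLast?_eq_s3 (hf : IsBLSP f) (β : A) : (f β).getLast? = some β := by
  obtain ⟨α, hα, hstep⟩ := hf
  by_cases hβ : β = α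
  · simp [hβ, hα]
  · obtain ⟨γ, hγ⟩ := hstep β hβ
    simp [hγ]

theorem flatMap_injective (hf : IsBLSP f) : Function.Injective (fun l : List A => l.flatMap f) :=
  List.flatMap_injective_of_getLast? Function.injective_id hf.getLast?_eq_s3

theorem exists_eq_cons_notMem (hα : f α = [α]) (hstep : ∀ β, β ≠ α → ∃ γ, f β = f γ ++ [β])
    (β : A) : ∃ t, f β = α :: t ∧ α ∉ t := by
  induction hn : (f β).length using Nat.strong_induction_on generalizing β with
  | _ n ih =>
  by_cases hβ : β = α
  · exact ⟨[], by simp [hβ, hα]⟩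
  · obtain ⟨γ, hγ⟩ := hstep β hβ
    obtain ⟨t, ht, hαt⟩ := ih _ (by simp [← hn, hγ]) γ rfl
    exact ⟨t ++ [β], by simp [hγ, ht], by simpa [hαt] using Ne.symm hβ⟩

theorem eq_of_append_prefix (hα : f α = [α]) (hstep : ∀ β, β ≠ α → ∃ γ, f β = f γ ++ [β])
    {a b : A} (h : f a ++ [α] <+: f b ++ [α]) : a = b := by
  obtain ⟨s, hs, hαs⟩ := exists_eq_cons_notMem hα hstep a
  obtain ⟨t, ht, hαt⟩ := exists_eq_cons_notMem hα hstep b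
  rw [hs, ht, List.cons_append, List.cons_append, List.cons_prefix_cons] at h
  have hab : f a = f b := by rw [hs, ht, List.eq_of_append_singleton_prefix hαs hαt h.2]
  simpa [getLast?_eq_s3 ⟨α, hα, hstep⟩] using congrArg List.getLast? hab

end IsBLSP

theorem IsImage.prefI_flatMap_append_singleton {A : Type*} {f : A → List A} {w v : ℕ → A} {α : A}
    (hw : IsImage f w v) (hhead : ∀ β, ∃ t, f β = α :: t) (n : ℕ) :
    PrefI (((List.range n).map w).flatMap f ++ (f (w n) ++ [α])) v := by
  obtain ⟨t, ht⟩ := hhead (w (n + 1))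
  refine (hw (n + 2)).of_prefix ?_
  simp [List.range_succ, List.flatMap_append, ht]

theorem IsBLSP.eq_of_isImage {A : Type*} {f : A → List A} {α : A} (hα : f α = [α])
    (hstep : ∀ β, β ≠ α → ∃ γ, f β = f γ ++ [β]) {w w' v : ℕ → A}
    (hw : IsImage f w v) (hw' : IsImage f w' v) : w = w' := by
  have hhead β := (exists_eq_cons_notMem hα hstep β).imp fun _ => And.left
  funext n
  induction n using Nat.strong_induction_on with
  | _ n ih =>
  have hprefix : (List.range n).map w = (List.range n).map w' :=
    List.map_congr_left fun m hm => ih m (List.mem_range.mp hm)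
  have hx := hw.prefI_flatMap_append_singleton hhead n
  have hy := hw'.prefI_flatMap_append_singleton hhead n
  rw [← hprefix] at hy
  rcases hx.prefix_or_prefix hy with h | h
  · exact eq_of_append_prefix hα hstep ((List.prefix_append_right_inj _).mp h)
  · exact (eq_of_append_prefix hα hstep ((List.prefix_append_right_inj _).mp h)).symm

theorem bLSP_injective {A : Type*} (f : A → List A) (hf : IsBLSP f) :
    Function.Injective (fun l : List A => l.flatMap f) ∧
      ∀ w w' v : ℕ → A, IsImage f w v → IsImage f w' v → w = w' := by
  refine ⟨hf.flatMap_injective, fun _ _ _ hw hw' => ?_⟩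
  obtain ⟨α, hα, hstep⟩ := hf
  exact IsBLSP.eq_of_isImage hα hstep hw hw'
end

section
/- If the alphabet A has cardinality n ≥ 1, then the number of bLSP morphisms of A* is exactly n^(n−1). -/
/-!
Reversing the images turns a bLSP morphism `f` with fixed letter `α` into a family of words
`β, p β, p (p β), …, α`, where the parent `p β` is the penultimate letter of `f β`: the reversed
image of `β` is its path to the root in the tree on `A` with parent map `p`, rooted at `α`.
Conversely every rooted tree, encoded as a map `p : A → A` with `p^[n - 1]` constant, arises in
this way, so the bLSP morphisms are counted by the rooted labelled trees on `n` vertices.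

These are counted by Joyal's bijection. Given a rooted tree `p` and a vertex `v`, list the path
`P` from `v` to the root, list its vertex set as `S` in a fixed order of `A`, and define
`g : A → A` by `S[i] ↦ P[i]` on the path and by `p` elsewhere. The path becomes a union of
cycles of `g`, and all other points of `A` flow into it, so `P` is recovered as the image under
`g` of the periodic points of `g` in the fixed order, and then `p` and `v` are recovered too.
Every map `g` arises, so (number of rooted trees) `* n = n ^ n`.
-/

open Set

namespace Function

variable {α : Type*} {f g : α → α} {s : Set α} {x a c : α} {m : ℕ}

theorem exists_iterate_mem_periodicPts [Finite α] (f : α → α) (x : α) :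
    ∃ m, f^[m] x ∈ periodicPts f := by
  obtain ⟨i, j, hij, he⟩ := Finite.exists_ne_map_eq_of_infinite (fun n : ℕ => f^[n] x)
  wlog hlt : i < j generalizing i j
  · exact this j i hij.symm he.symm (by omega)
  refine ⟨i, mk_mem_periodicPts (n := j - i) (by omega) ?_⟩
  change f^[j - i] (f^[i] x) = f^[i] x
  rw [← iterate_add_apply, Nat.sub_add_cancel hlt.le]
  exact he.symm

theorem subset_periodicPts_of_mapsTo_of_injOn (hs : s.Finite) (hmaps : MapsTo f s s)
    (hinj : InjOn f s) : s ⊆ periodicPts f := by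
  have : Finite s := hs
  intro x hx
  have hper := (hmaps.restrict_inj.2 hinj).mem_periodicPts ⟨x, hx⟩
  exact Semiconj.mapsTo_periodicPts (g := Subtype.val) (fun _ => rfl) hper

theorem mem_of_mem_periodicPts_of_iterate_mem (hs : MapsTo f s s) (hx : x ∈ periodicPts f)
    (hm : f^[m] x ∈ s) : x ∈ s := by
  obtain ⟨k, hk, hkx⟩ := hx
  have hmk : m ≤ k * (m + 1) := by nlinarith
  rw [← (hkx.mul_const (m + 1)).eq, ← Nat.sub_add_cancel hmk, iterate_add_apply]
  exact hs.iterate _ hm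

theorem exists_iterate_mem_of_eqOn_compl (hfg : ∀ y ∉ s, g y = f y) (hm : f^[m] x ∈ s) :
    ∃ i, g^[i] x ∈ s := by
  induction m generalizing x with
  | zero => exact ⟨0, hm⟩
  | succ m ih =>
    by_cases hx : x ∈ s
    · exact ⟨0, hx⟩
    · rw [iterate_succ_apply, ← hfg x hx] at hm
      obtain ⟨i, hi⟩ := ih hm
      exact ⟨i + 1, hi⟩

theorem iterate_injOn_Iic (h : ∀ i < m, f^[i] a ≠ f^[m] a) : InjOn (f^[·] a) (Iic m) := by
  have key : ∀ i j, i < j → j ≤ m → f^[i] a ≠ f^[j] a := by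
    intro i j hij hjm he
    -- shifting a coincidence `f^[i] a = f^[j] a` reaches `f^[m] a` too early
    refine h (m - (j - i)) (by omega) ?_
    calc f^[m - (j - i)] a = f^[m - j] (f^[i] a) := by
          rw [← iterate_add_apply]; congr 1; omega
      _ = f^[m] a := by rw [he, ← iterate_add_apply]; congr 1; omega
  intro i hi j hj hij
  rcases lt_trichotomy i j with hlt | heq | hgt
  · exact absurd hij (key i j hlt hj)
  · exact heq
  · exact absurd hij.symm (key j i hgt hi)

end Function

/-- The elements of `s`, listed in an order that depends only on `s`. -/
noncomputable def Set.toList {α : Type*} [Fintype α] (s : Set α) : List α := by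
  classical exact (Finset.univ.filter (· ∈ s)).toList

theorem Set.mem_toList {α : Type*} [Fintype α] {s : Set α} {x : α} : x ∈ s.toList ↔ x ∈ s := by
  classical simp [Set.toList]

theorem Set.nodup_toList {α : Type*} [Fintype α] (s : Set α) : s.toList.Nodup := by
  classical exact Finset.nodup_toList _

namespace List

variable {α : Type*} {S P : List α} {f g : α → α} {a : α}

theorem IsChain.iterate_getElem (hchain : IsChain (g · = ·) S) {i : ℕ} :
    ∀ k (h : i + k < S.length), g^[k] S[i] = S[i + k]
  | 0, _ => rfl
  | k + 1, h => by
    rw [Function.iterate_succ_apply', hchain.iterate_getElem k (by omega),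
      hchain.getElem (i + k) h]
    rfl

theorem IsChain.exists_iterate_eq_getLast (hchain : IsChain (g · = ·) S) (ha : a ∈ S) :
    ∃ m, g^[m] a = S.getLast (ne_nil_of_mem ha) := by
  obtain ⟨i, hi, rfl⟩ := getElem_of_mem ha
  refine ⟨S.length - 1 - i, ?_⟩
  rw [hchain.iterate_getElem _ (by omega), getLast_eq_getElem]
  congr 1
  omega

variable [DecidableEq α]

/-- Sends `S[i]` to `P[i]` (or leaves it fixed if `P` is too short) and agrees with `f` off `S`. -/
def reassign (S P : List α) (f : α → α) (a : α) : α :=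
  if a ∈ S then P.getD (S.idxOf a) a else f a

theorem reassign_of_not_mem (ha : a ∉ S) : S.reassign P f a = f a := if_neg ha

theorem reassign_getElem (hS : S.Nodup) {i : ℕ} (hi : i < S.length) :
    S.reassign P f S[i] = P.getD i S[i] := by
  rw [reassign, if_pos (getElem_mem hi), hS.idxOf_getElem]

theorem map_reassign (hS : S.Nodup) (hlen : S.length = P.length) :
    S.map (S.reassign P f) = P :=
  ext_getElem (by simp [hlen]) fun i _ h => by
    rw [getElem_map, reassign_getElem hS, getD_eq_getElem _ _ h]

theorem reassign_map (hS : S.Nodup) (h : ∀ x ∉ S, f x = g x) : S.reassign (S.map g) f = g := by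
  funext x
  by_cases hx : x ∈ S
  · obtain ⟨i, hi, rfl⟩ := getElem_of_mem hx
    rw [reassign_getElem hS, getD_eq_getElem _ _ (by simpa), getElem_map]
  · rw [reassign_of_not_mem hx, h x hx]

theorem reassign_tail_getElem (hS : S.Nodup) {i : ℕ} (hi : i + 1 < S.length) :
    S.reassign S.tail f S[i] = S[i + 1] := by
  rw [reassign_getElem hS, getD_eq_getElem _ _ (by simp; omega), getElem_tail]

theorem reassign_tail_getLast (hS : S.Nodup) (hne : S ≠ []) :
    S.reassign S.tail f (S.getLast hne) = S.getLast hne := by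
  rw [getLast_eq_getElem, reassign_getElem hS, getD_eq_default _ _ (by simp)]

theorem reassign_tail_eq (hS : S.Nodup) (hchain : IsChain (g · = ·) S)
    (hlast : ∀ hne, g (S.getLast hne) = S.getLast hne) (h : ∀ x ∉ S, f x = g x) :
    S.reassign S.tail f = g := by
  funext x
  by_cases hx : x ∈ S
  · obtain ⟨i, hi, rfl⟩ := getElem_of_mem hx
    by_cases hi' : i + 1 < S.length
    · rw [reassign_tail_getElem hS hi', hchain.getElem i hi']
    · have hne : S ≠ [] := ne_nil_of_mem hx
      have : S[i] = S.getLast hne := by rw [getLast_eq_getElem]; congr 1; omega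
      rw [this, reassign_tail_getLast hS hne, hlast]
  · rw [reassign_of_not_mem hx, h x hx]

end List

namespace Function

variable {α : Type*} [Fintype α] {f g : α → α} {a c v x : α} {t : List α}

/-- `f` is the parent map of a tree on `α` rooted at `c`, with a loop at the root. -/
def IsRootedAt (f : α → α) (c : α) : Prop := ∀ a, f^[Fintype.card α - 1] a = c

def IsRooted (f : α → α) : Prop := ∃ c, IsRootedAt f c

theorem IsRootedAt.apply_root (hc : IsRootedAt f c) : f c = c := by
  have := hc (f c)
  rwa [← iterate_succ_apply, iterate_succ_apply', hc c] at this

theorem isRootedAt_of_forall_exists_iterate_eq (hfix : f c = c) (h : ∀ a, ∃ m, f^[m] a = c) :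
    IsRootedAt f c := by
  classical
  intro a
  set k := Nat.find (h a)
  have hk : f^[k] a = c := Nat.find_spec (h a)
  have hinj : InjOn (f^[·] a) (Iic k) :=
    iterate_injOn_Iic fun i hi => hk ▸ Nat.find_min (h a) hi
  have hcard : k + 1 ≤ Fintype.card α := by
    simpa using Finset.card_le_card_of_injOn (s := Finset.range (k + 1)) (t := Finset.univ)
      (f^[·] a) (fun _ _ => Finset.mem_univ _) fun i hi j hj =>
        hinj (by simpa [Nat.lt_succ_iff] using hi) (by simpa [Nat.lt_succ_iff] using hj)
  rw [← Nat.sub_add_cancel (show k ≤ Fintype.card α - 1 by omega), iterate_add_apply, hk,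
    iterate_fixed hfix]

section

variable [DecidableEq α]

def depth (f : α → α) (a : α) : ℕ :=
  Nat.find (⟨_, rfl⟩ : ∃ i, f^[i] a = f^[Fintype.card α - 1] a)

/-- For a rooted `f`, the path `a, f a, f (f a), …` from `a` to the root. -/
def spine (f : α → α) (a : α) : List α :=
  List.iterate f a (depth f a + 1)

theorem nodup_spine : (spine f a).Nodup := by
  rw [spine, ← List.range_map_iterate]
  refine List.Nodup.map_on (fun i hi j hj => ?_) List.nodup_range
  simp only [List.mem_range, Nat.lt_succ_iff] at hi hj
  refine iterate_injOn_Iic (fun i hi => ?_) hi hj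
  have hex : ∃ i, f^[i] a = f^[Fintype.card α - 1] a := ⟨_, rfl⟩
  rw [show f^[depth f a] a = _ from Nat.find_spec hex]
  exact Nat.find_min hex hi

section

variable (hc : IsRootedAt f c)
include hc

theorem depth_eq_iff {d : ℕ} : depth f a = d ↔ f^[d] a = c ∧ ∀ i < d, f^[i] a ≠ c := by
  rw [depth, Nat.find_eq_iff, hc a]

theorem iterate_depth : f^[depth f a] a = c :=
  ((depth_eq_iff hc).1 rfl).1

theorem depth_root : depth f c = 0 :=
  (depth_eq_iff hc).2 ⟨rfl, fun _ hi => absurd hi (Nat.not_lt_zero _)⟩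

theorem spine_root : spine f c = [c] := by
  rw [spine, depth_root hc]
  rfl

theorem depth_of_ne (ha : a ≠ c) : depth f a = depth f (f a) + 1 := by
  obtain ⟨hd, hmin⟩ := (depth_eq_iff hc (a := f a)).1 rfl
  refine (depth_eq_iff hc).2 ⟨by rwa [iterate_succ_apply], fun i hi => ?_⟩
  cases i with
  | zero => exact ha
  | succ i => rw [iterate_succ_apply]; exact hmin i (by omega)

theorem spine_of_ne (ha : a ≠ c) : spine f a = a :: spine f (f a) := by
  rw [spine, depth_of_ne hc ha]
  rfl

theorem getLast_spine : (spine f a).getLast (by simp [spine]) = c := by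
  simp only [List.getLast_eq_getElem, spine, List.getElem_iterate, List.length_iterate,
    Nat.add_sub_cancel]
  exact iterate_depth hc

theorem root_mem_spine : c ∈ spine f a :=
  getLast_spine hc ▸ List.getLast_mem _

theorem getD_spine_one : (spine f a).getD 1 a = f a := by
  by_cases ha : a = c
  · subst ha; simp [spine_root hc, hc.apply_root]
  · rw [spine_of_ne hc ha, spine]
    rfl

theorem eq_spine_of_forall_ne (F : α → List α) (hroot : F c = [c])
    (hF : ∀ a, a ≠ c → F a = a :: F (f a)) : F = spine f := by
  funext a
  induction hd : depth f a generalizing a with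
  | zero =>
    have : a = c := by simpa [hd] using iterate_depth hc (a := a)
    rw [this, hroot, spine_root hc]
  | succ d ih =>
    have ha : a ≠ c := by
      rintro rfl
      rw [depth_root hc] at hd
      exact absurd hd (Nat.succ_ne_zero d).symm
    rw [hF a ha, spine_of_ne hc ha, ih (f a) (by have := depth_of_ne hc ha; omega)]

theorem spine_eq_of_isChain (hnodup : (x :: t).Nodup)
    (hchain : List.IsChain (f · = ·) (x :: t)) (hlast : (x :: t).getLast (by simp) = c) :
    spine f x = x :: t := by
  induction t generalizing x with
  | nil => simp at hlast; rw [hlast, spine_root hc]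
  | cons y t ih =>
    have hx : x ≠ c := by
      rintro rfl
      exact (List.nodup_cons.1 hnodup).1 (hlast ▸ List.getLast_mem _)
    rw [List.isChain_cons_cons] at hchain
    rw [spine_of_ne hc hx, hchain.1, ih hnodup.of_cons hchain.2 (by simpa using hlast)]

end

theorem exists_isRootedAt_eq_spine {G : α → List α} (hroot : G c = [c])
    (hstep : ∀ a, a ≠ c → ∃ b, G a = a :: G b) : ∃ f, IsRootedAt f c ∧ G = spine f := by
  have hhead : ∀ a, ∃ w, G a = a :: w := fun a => by
    by_cases ha : a = c
    · exact ⟨[], ha ▸ hroot⟩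
    · obtain ⟨b, hb⟩ := hstep a ha
      exact ⟨_, hb⟩
  let p a := (G a).getD 1 a
  have hp : ∀ a, a ≠ c → G a = a :: G (p a) := by
    intro a ha
    obtain ⟨b, hb⟩ := hstep a ha
    obtain ⟨w, hw⟩ := hhead b
    have : p a = b := by simp [p, hb, hw]
    rw [this, hb]
  have hpc : p c = c := by simp [p, hroot]
  have hreach : ∀ a, ∃ m, p^[m] a = c := by
    intro a
    induction hn : (G a).length using Nat.strong_induction_on generalizing a with
    | _ n ih =>
      by_cases ha : a = c
      · exact ⟨0, ha⟩
      · have hlen := congrArg List.length (hp a ha)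
        obtain ⟨m, hm⟩ := ih _ (by simp at hlen; omega) (p a) rfl
        exact ⟨m + 1, hm⟩
  have hc := isRootedAt_of_forall_exists_iterate_eq hpc hreach
  exact ⟨p, hc, eq_spine_of_forall_ne hc G hroot hp⟩

def spineMorphism (f : α → α) (a : α) : List α := (spine f a).reverse

theorem isBLSP_spineMorphism (hc : IsRootedAt f c) : IsBLSP (spineMorphism f) :=
  ⟨c, by simp [spineMorphism, spine_root hc],
    fun a ha => ⟨f a, by simp [spineMorphism, spine_of_ne hc ha]⟩⟩

theorem injOn_spineMorphism : InjOn (spineMorphism (α := α)) {f | IsRooted f} := by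
  rintro f ⟨c, hc⟩ f' ⟨c', hc'⟩ h
  funext a
  have := congrArg (fun F => (F a).reverse.getD 1 a) h
  simp only [spineMorphism, List.reverse_reverse] at this
  rwa [getD_spine_one hc, getD_spine_one hc'] at this

theorem exists_spineMorphism_eq {F : α → List α} (hF : IsBLSP F) :
    ∃ f, IsRooted f ∧ spineMorphism f = F := by
  obtain ⟨c, hc, hstep⟩ := hF
  obtain ⟨f, hf, hG⟩ := exists_isRootedAt_eq_spine (G := fun a => (F a).reverse) (c := c)
    (by simp [hc]) fun a ha => by
      obtain ⟨b, hb⟩ := hstep a ha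
      exact ⟨b, by simp [hb]⟩
  refine ⟨f, ⟨c, hf⟩, funext fun a => ?_⟩
  simp [spineMorphism, ← hG]

end

noncomputable def cycleList (g : α → α) : List α := (periodicPts g).toList.map g

theorem mem_cycleList : x ∈ cycleList g ↔ x ∈ periodicPts g := by
  rw [← (bijOn_periodicPts g).image_eq]
  simp [cycleList, Set.mem_toList]

theorem nodup_cycleList : (cycleList g).Nodup :=
  (Set.nodup_toList _).map_on fun _ hx _ hy =>
    (bijOn_periodicPts g).injOn (Set.mem_toList.1 hx) (Set.mem_toList.1 hy)

theorem cycleList_ne_nil [Nonempty α] : cycleList g ≠ [] := by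
  obtain ⟨m, hm⟩ := exists_iterate_mem_periodicPts g (Classical.arbitrary α)
  exact List.ne_nil_of_mem (mem_cycleList.2 hm)

section

variable [DecidableEq α]

noncomputable def joyal (f : α → α) (v : α) : α → α :=
  {x | x ∈ spine f v}.toList.reassign (spine f v) f

noncomputable def joyalTree (g : α → α) : α → α := (cycleList g).reassign (cycleList g).tail g

theorem map_joyal : {x | x ∈ spine f v}.toList.map (joyal f v) = spine f v := by
  refine List.map_reassign (Set.nodup_toList _) ?_
  refine ((List.perm_ext_iff_of_nodup (Set.nodup_toList _) nodup_spine).2 fun _ => ?_).length_eq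
  exact Set.mem_toList

section

variable (hc : IsRootedAt f c)
include hc

theorem periodicPts_joyal : periodicPts (joyal f v) = {x | x ∈ spine f v} := by
  have hmaps : MapsTo (joyal f v) {x | x ∈ spine f v} {x | x ∈ spine f v} := fun x hx => by
    change _ ∈ spine f v
    rw [← map_joyal]
    exact List.mem_map_of_mem (Set.mem_toList.2 hx)
  refine Subset.antisymm (fun x hx => ?_) ?_
  · have hoff : ∀ y ∉ {x | x ∈ spine f v}, joyal f v y = f y := fun y hy =>
      List.reassign_of_not_mem (mt Set.mem_toList.1 hy)
    obtain ⟨i, hi⟩ := exists_iterate_mem_of_eqOn_compl hoff (m := Fintype.card α - 1)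
      (show f^[_] x ∈ spine f v by rw [hc x]; exact root_mem_spine hc)
    exact mem_of_mem_periodicPts_of_iterate_mem hmaps hx hi
  · refine subset_periodicPts_of_mapsTo_of_injOn (List.finite_toSet _) hmaps
      fun x hx y hy hxy => ?_
    have hnodup : ({x | x ∈ spine f v}.toList.map (joyal f v)).Nodup := by
      rw [map_joyal]
      exact nodup_spine
    exact List.inj_on_of_nodup_map hnodup (Set.mem_toList.2 hx) (Set.mem_toList.2 hy) hxy

theorem cycleList_joyal : cycleList (joyal f v) = spine f v := by
  rw [cycleList, periodicPts_joyal hc, map_joyal]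

theorem joyalTree_joyal : joyalTree (joyal f v) = f := by
  rw [joyalTree, cycleList_joyal hc]
  refine List.reassign_tail_eq nodup_spine ?_ (fun _ => ?_) fun x hx => ?_
  · refine List.isChain_iff_getElem.2 fun i hi => ?_
    simp only [spine, List.getElem_iterate]
    exact (iterate_succ_apply' f i v).symm
  · rw [getLast_spine hc]
    exact hc.apply_root
  · exact List.reassign_of_not_mem (mt Set.mem_toList.1 hx)

end

theorem joyalTree_of_not_mem (hx : x ∉ cycleList g) : joyalTree g x = g x :=
  List.reassign_of_not_mem hx

theorem isChain_joyalTree : List.IsChain (joyalTree g · = ·) (cycleList g) :=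
  List.isChain_iff_getElem.2 fun _ hi => List.reassign_tail_getElem nodup_cycleList hi

theorem isRootedAt_joyalTree (hne : cycleList g ≠ []) :
    IsRootedAt (joyalTree g) ((cycleList g).getLast hne) := by
  refine isRootedAt_of_forall_exists_iterate_eq
    (List.reassign_tail_getLast nodup_cycleList hne) fun a => ?_
  obtain ⟨m, hm⟩ := exists_iterate_mem_periodicPts g a
  obtain ⟨i, hi⟩ := exists_iterate_mem_of_eqOn_compl (s := {x | x ∈ cycleList g})
    (fun _ hy => joyalTree_of_not_mem hy) (mem_cycleList.2 hm)
  obtain ⟨k, hk⟩ := isChain_joyalTree.exists_iterate_eq_getLast hi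
  exact ⟨k + i, by rw [iterate_add_apply, hk]⟩

theorem spine_joyalTree (hx : cycleList g = x :: t) : spine (joyalTree g) x = cycleList g := by
  have hne : cycleList g ≠ [] := by simp [hx]
  rw [hx]
  refine spine_eq_of_isChain (isRootedAt_joyalTree hne) (hx ▸ nodup_cycleList) ?_
    (by simp only [hx])
  rw [← hx]
  exact isChain_joyalTree

theorem joyal_joyalTree (hx : cycleList g = x :: t) : joyal (joyalTree g) x = g := by
  have hper : {y | y ∈ cycleList g} = periodicPts g := Set.ext fun _ => mem_cycleList
  rw [joyal, spine_joyalTree hx, hper]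
  refine List.reassign_map (Set.nodup_toList _) fun y hy => joyalTree_of_not_mem ?_
  rwa [mem_cycleList, ← Set.mem_toList]

end

theorem ncard_isBLSP : {F : α → List α | IsBLSP F}.ncard = {f : α → α | IsRooted f}.ncard := by
  classical
  have hbij : BijOn spineMorphism {f : α → α | IsRooted f} {F | IsBLSP F} :=
    ⟨fun _ ⟨_, hc⟩ => isBLSP_spineMorphism hc, injOn_spineMorphism,
      fun _ hF => exists_spineMorphism_eq hF⟩
  rw [← hbij.image_eq, hbij.injOn.ncard_image]

theorem ncard_isRooted_mul_card [Nonempty α] :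
    {f : α → α | IsRooted f}.ncard * Fintype.card α = Fintype.card α ^ Fintype.card α := by
  classical
  have hbij : BijOn (fun p : (α → α) × α => joyal p.1 p.2) ({f | IsRooted f} ×ˢ univ) univ := by
    refine ⟨fun _ _ => mem_univ _, ?_, fun g _ => ?_⟩
    · rintro ⟨f, v⟩ ⟨⟨c, hc⟩, -⟩ ⟨f', v'⟩ ⟨⟨c', hc'⟩, -⟩ h
      dsimp only at hc hc' h
      have hf : f = f' := by
        rw [← joyalTree_joyal hc (v := v), ← joyalTree_joyal hc' (v := v')]
        exact congrArg joyalTree h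
      have hspine : spine f v = spine f' v' := by
        rw [← cycleList_joyal hc, ← cycleList_joyal hc']
        exact congrArg cycleList h
      have hv : v = v' := by simpa [spine] using congrArg List.head? hspine
      rw [hf, hv]
    · obtain ⟨x, t, hx⟩ := List.exists_cons_of_ne_nil (cycleList_ne_nil (g := g))
      exact ⟨(joyalTree g, x), ⟨⟨_, isRootedAt_joyalTree (by simp [hx])⟩, mem_univ _⟩,
        joyal_joyalTree hx⟩
  have h := hbij.injOn.ncard_image
  rw [hbij.image_eq, Set.ncard_prod, ncard_univ, ncard_univ] at h
  simpa [Nat.card_eq_fintype_card] using h.symm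

theorem ncard_isRooted [Nonempty α] :
    {f : α → α | IsRooted f}.ncard = Fintype.card α ^ (Fintype.card α - 1) := by
  classical
  have hpos : 0 < Fintype.card α := Fintype.card_pos
  apply Nat.eq_of_mul_eq_mul_right hpos
  rw [ncard_isRooted_mul_card, ← pow_succ, Nat.sub_add_cancel hpos]

end Function

theorem card_bLSP {A : Type*} [Fintype A] (n : ℕ) (hn : 1 ≤ n)
    (hA : Fintype.card A = n) :
    {f : A → List A | IsBLSP f}.ncard = n ^ (n - 1) := by
  have : Nonempty A := Fintype.card_pos_iff.1 (hA ▸ hn)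
  rw [Function.ncard_isBLSP, Function.ncard_isRooted, hA]
end

section
/- For every infinite LSP word w over a finite alphabet A, there exist a bLSP morphism f of B*, where B = alph(w) is the set of letters occurring in w, and an infinite word w' over B such that w = f(w'). -/
/-!
Let `α = w 0`. If a letter `b ≠ α` had two distinct left neighbours in `w`, the factor `b` would
be left special, hence a prefix of `w`, i.e. `b = α`. So every `b ≠ α` has a unique left
neighbour `pred b`, and `f α = α`, `f b = f (pred b) b` is a bLSP morphism. Along `w` away from
`α` the first occurrences of consecutive letters strictly increase, so on a finite alphabet `α`
occurs infinitely often. Each block of `w` from one occurrence of `α` to just before the next is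
`f` of its last letter, and `w'` is the sequence of these last letters.
-/

open Function

section Transfer

variable {A B C : Type*}

theorem FactorI.map {v : ℕ → A} {u : List A} (g : A → B) (h : FactorI v u) :
    FactorI (g ∘ v) (u.map g) := by
  obtain ⟨k, hk⟩ := h
  exact ⟨k, fun i hi => by simp [hk]⟩

theorem PrefI.map {u : List A} {v : ℕ → A} (g : A → B) (h : PrefI u v) :
    PrefI (u.map g) (g ∘ v) :=
  fun i hi => by simp [h i (by simpa using hi)]

theorem PrefI.of_map {u : List A} {v : ℕ → A} {g : A → B} (hg : Injective g)
    (h : PrefI (u.map g) (g ∘ v)) : PrefI u v := by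
  intro i hi
  have := h i (by simpa using hi)
  rw [List.getElem_map] at this
  exact hg this

theorem LSPInf.of_comp {v : ℕ → A} {g : A → B} (hg : Injective g) (h : LSPInf (g ∘ v)) :
    LSPInf v := fun _ _ _ hab ha hb =>
  (h _ _ _ (hg.ne hab) (ha.map g) (hb.map g)).of_map hg

theorem IsImage.map {f : C → List A} {w' : ℕ → C} {v : ℕ → A} (g : A → B) (h : IsImage f w' v) :
    IsImage (fun a => (f a).map g) w' (g ∘ v) := by
  intro n
  rw [← List.map_flatMap]
  exact (h n).map g

theorem prefI_map_range (v : ℕ → A) (n : ℕ) : PrefI ((List.range n).map v) v :=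
  fun i hi => by simp

end Transfer

namespace Desubstitution

variable {B : Type*} (v : ℕ → B)

-- `sInf ∅ = 0`: a letter not occurring in `v` gets `0`.
noncomputable def firstOcc (b : B) : ℕ := sInf {n | v n = b}

noncomputable def pred (b : B) : B := v (firstOcc v b - 1)

noncomputable def desubstitutedWord (k : ℕ) : B := v (Nat.nth (fun n => v n = v 0) (k + 1) - 1)

variable {v}

theorem firstOcc_le {b : B} {n : ℕ} (h : v n = b) : firstOcc v b ≤ n := Nat.sInf_le h

theorem apply_firstOcc (hsurj : Surjective v) (b : B) : v (firstOcc v b) = b :=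
  Nat.sInf_mem (hsurj b)

theorem firstOcc_eq_zero_iff (hsurj : Surjective v) {b : B} : firstOcc v b = 0 ↔ b = v 0 :=
  ⟨fun h => by rw [← h, apply_firstOcc hsurj], fun h => Nat.le_zero.mp (firstOcc_le h.symm)⟩

theorem firstOcc_pred_lt {b : B} (h : firstOcc v b ≠ 0) : firstOcc v (pred v b) < firstOcc v b :=
  (firstOcc_le rfl).trans_lt (Nat.sub_one_lt h)

-- Guarding on `firstOcc v b = 0` instead of `b = v 0` makes the recursion terminate for every
-- `v`; for surjective `v` the two agree (`firstOcc_eq_zero_iff`).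
variable (v) in
noncomputable def predChain (b : B) : List B :=
  if h : firstOcc v b = 0 then [b]
  else
    have := firstOcc_pred_lt h
    predChain (pred v b) ++ [b]
termination_by firstOcc v b

theorem predChain_apply_zero : predChain v (v 0) = [v 0] := by
  rw [predChain, dif_pos (Nat.le_zero.mp (firstOcc_le rfl))]

theorem predChain_of_ne (hsurj : Surjective v) {b : B} (hb : b ≠ v 0) :
    predChain v b = predChain v (pred v b) ++ [b] := by
  rw [predChain, dif_neg (mt (firstOcc_eq_zero_iff hsurj).mp hb)]

theorem isBLSP_predChain (hsurj : Surjective v) : IsBLSP (predChain v) :=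
  ⟨v 0, predChain_apply_zero, fun _ hb => ⟨_, predChain_of_ne hsurj hb⟩⟩

end Desubstitution

namespace LSPInf

open Desubstitution

variable {B : Type*} {v : ℕ → B}

theorem eq_of_succ_eq (hv : LSPInf v) {m n : ℕ} (h : v (m + 1) = v (n + 1))
    (h0 : v (m + 1) ≠ v 0) : v m = v n := by
  by_contra hne
  have hm : FactorI v [v m, v (m + 1)] := ⟨m, fun i hi => by
    simp only [List.length_cons, List.length_nil] at hi; interval_cases i <;> rfl⟩
  have hn : FactorI v [v n, v (m + 1)] := ⟨n, fun i hi => by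
    simp only [List.length_cons, List.length_nil] at hi; interval_cases i <;> simp [h]⟩
  exact h0 (hv [v (m + 1)] _ _ hne hm hn 0 (by simp))

theorem pred_apply_succ (hv : LSPInf v) (hsurj : Surjective v) {n : ℕ}
    (h : v (n + 1) ≠ v 0) : pred v (v (n + 1)) = v n := by
  obtain ⟨k, hk⟩ := Nat.exists_eq_add_one_of_ne_zero (mt (firstOcc_eq_zero_iff hsurj).mp h)
  have hocc := apply_firstOcc hsurj (v (n + 1))
  rw [hk] at hocc
  rw [pred, hk, Nat.add_sub_cancel]
  exact hv.eq_of_succ_eq hocc (hocc ▸ h)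

theorem infinite_setOf_eq_apply_zero [Finite B] (hv : LSPInf v) (hsurj : Surjective v) :
    {n | v n = v 0}.Infinite := by
  intro hfin
  obtain ⟨N, hN⟩ := hfin.bddAbove
  have hne (i : ℕ) : v (N + i + 1) ≠ v 0 := fun h => by
    have := hN h
    omega
  have hmono : StrictMono fun i => firstOcc v (v (N + i)) := by
    refine strictMono_nat_of_lt_succ fun i => ?_
    rw [← add_assoc, ← hv.pred_apply_succ hsurj (hne i)]
    exact firstOcc_pred_lt (mt (firstOcc_eq_zero_iff hsurj).mp (hne i))
  exact not_injective_infinite_finite _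
    (Injective.of_comp (f := firstOcc v) (g := fun i => v (N + i)) hmono.injective)

theorem predChain_eq_map_range' (hv : LSPInf v) (hsurj : Surjective v) {p : ℕ}
    (hp : v p = v 0) :
    ∀ d, (∀ j, p < j → j ≤ p + d → v j ≠ v 0) →
      predChain v (v (p + d)) = (List.range' p (d + 1)).map v
  | 0, _ => by simp [hp, predChain_apply_zero]
  | d + 1, hgap => by
    have hlast : v (p + d + 1) ≠ v 0 := hgap _ (by omega) (by omega)
    rw [← add_assoc, predChain_of_ne hsurj hlast, hv.pred_apply_succ hsurj hlast,
      hv.predChain_eq_map_range' hsurj hp d fun j h₁ h₂ => hgap j h₁ (by omega),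
      List.range'_concat (n := d + 1)]
    simp [add_assoc]

theorem flatMap_predChain_desubstitutedWord [Finite B] (hv : LSPInf v) (hsurj : Surjective v)
    (n : ℕ) :
    ((List.range n).map (desubstitutedWord v)).flatMap (predChain v) =
      (List.range (Nat.nth (fun n => v n = v 0) n)).map v := by
  have hinf := hv.infinite_setOf_eq_apply_zero hsurj
  induction n with
  | zero => simp [Nat.nth_zero_of_zero (p := fun n => v n = v 0) rfl]
  | succ n ih =>
    set a := Nat.nth (fun n => v n = v 0) n
    set b := Nat.nth (fun n => v n = v 0) (n + 1) with hb
    have hab : a < b := Nat.nth_strictMono hinf n.lt_succ_self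
    obtain ⟨d, hd⟩ : ∃ d, b = a + (d + 1) := ⟨b - 1 - a, by omega⟩
    have hgap (j : ℕ) (h₁ : a < j) (h₂ : j ≤ a + d) : v j ≠ v 0 := fun hj =>
      h₁.not_ge (Nat.le_nth_of_lt_nth_succ (p := fun n => v n = v 0) (by omega) hj)
    have hblock : predChain v (v (a + d)) = (List.range' a (d + 1)).map v :=
      hv.predChain_eq_map_range' hsurj (Nat.nth_mem_of_infinite hinf n) d hgap
    rw [List.range_succ, List.map_append, List.flatMap_append, ih, List.map_singleton,
      List.flatMap_singleton, desubstitutedWord, ← hb, hd, Nat.add_succ_sub_one, hblock,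
      List.range_eq_range', List.range_eq_range', ← List.range'_append (m := a), List.map_append]
    simp

theorem exists_isBLSP_isImage [Finite B] (hv : LSPInf v) (hsurj : Surjective v) :
    ∃ (f : B → List B) (w' : ℕ → B), IsBLSP f ∧ IsImage f w' v := by
  refine ⟨predChain v, desubstitutedWord v, isBLSP_predChain hsurj, fun n => ?_⟩
  rw [hv.flatMap_predChain_desubstitutedWord hsurj]
  exact prefI_map_range v _

end LSPInf

theorem lsp_desubstitution {A : Type*} [Fintype A] (w : ℕ → A) (hw : LSPInf w) :
    ∃ (f : Set.range w → List (Set.range w)) (w' : ℕ → Set.range w),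
      IsBLSP f ∧ IsImage (fun b => (f b).map Subtype.val) w' w := by
  have hv : LSPInf (Set.rangeFactorization w) := LSPInf.of_comp Subtype.val_injective hw
  obtain ⟨f, w', hf, himage⟩ := hv.exists_isBLSP_isImage Set.rangeFactorization_surjective
  exact ⟨f, w', hf, himage.map Subtype.val⟩
end

section
/- Let w be an infinite LSP word over a finite alphabet A, let f and g be bLSP morphisms of A*, and let w', w'' be infinite words over A such that w = f(w') and w = g(w''). Then w' = w'' and f(β) = g(β) for every letter β occurring in w'. -/
/-! Every image `f β` under a bLSP morphism is `α β₁ ⋯ βₖ β` with no further `α`, so in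
`w = f(w')` the occurrences of `α` mark exactly the starts of the blocks `f (w' n)`. Hence
any two such factorizations of `w` have the same block boundaries, hence the same blocks, and
the last letter of a block recovers the letter of `w'` it comes from. -/

section Desubstitution

variable {A B : Type*}

def IsMarkedBy (α : A) (f : A → List A) : Prop :=
  ∀ β, ∃ t, f β = α :: t ∧ α ∉ t ∧ (f β).getLast? = some β

theorem IsBLSP.exists_isMarkedBy {f : A → List A} (hf : IsBLSP f) : ∃ α, IsMarkedBy α f := by
  obtain ⟨α, hα, hstep⟩ := hf
  refine ⟨α, fun β => ?_⟩
  induction hn : (f β).length using Nat.strong_induction_on generalizing β with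
  | _ n ih =>
    by_cases hβ : β = α
    · subst hβ
      exact ⟨[], by simp [hα]⟩
    · obtain ⟨γ, hγ⟩ := hstep β hβ
      obtain ⟨t, ht, hαt, -⟩ := ih _ (by rw [← hn, hγ]; simp) γ rfl
      refine ⟨t ++ [β], by rw [hγ, ht]; rfl, ?_, by simp [hγ]⟩
      simp [hαt, Ne.symm hβ]

namespace IsMarkedBy

variable {α : A} {f : A → List A}

theorem length_pos (hf : IsMarkedBy α f) (β : A) : 0 < (f β).length := by
  obtain ⟨t, ht, -⟩ := hf β
  simp [ht]

theorem getElem_eq_iff (hf : IsMarkedBy α f) (β : A) {j : ℕ} (hj : j < (f β).length) :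
    (f β)[j] = α ↔ j = 0 := by
  obtain ⟨t, ht, hαt, -⟩ := hf β
  rw [List.getElem_of_eq ht hj]
  rcases j with _ | k
  · simp
  · simp only [List.getElem_cons_succ, Nat.add_one_ne_zero, iff_false]
    exact fun h => hαt (h ▸ List.getElem_mem _)

end IsMarkedBy

def imagePrefix (f : A → List B) (w' : ℕ → A) (n : ℕ) : List B :=
  ((List.range n).map w').flatMap f

theorem imagePrefix_succ (f : A → List B) (w' : ℕ → A) (n : ℕ) :
    imagePrefix f w' (n + 1) = imagePrefix f w' n ++ f (w' n) := by
  simp [imagePrefix, List.range_succ]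

theorem IsImage.getElem_eq {f : A → List B} {w' : ℕ → A} {w : ℕ → B} (hfw : IsImage f w' w)
    (n : ℕ) {j : ℕ} (hj : j < (f (w' n)).length) :
    (f (w' n))[j] = w ((imagePrefix f w' n).length + j) := by
  have hlt : (imagePrefix f w' n).length + j < (imagePrefix f w' (n + 1)).length := by
    simp [imagePrefix_succ, hj]
  have hprefix : (imagePrefix f w' (n + 1))[_]'hlt = w _ := hfw (n + 1) _ hlt
  rw [← hprefix, List.getElem_of_eq (imagePrefix_succ f w' n) hlt,
    List.getElem_append_right (by omega)]
  simp

section Factorization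

variable {α : A} {f g : A → List A} {w w' w'' : ℕ → A}

theorem IsImage.apply_eq_iff (hf : IsMarkedBy α f) (hfw : IsImage f w' w) (n : ℕ) {j : ℕ}
    (hj : j < (f (w' n)).length) : w ((imagePrefix f w' n).length + j) = α ↔ j = 0 := by
  rw [← hfw.getElem_eq n hj, hf.getElem_eq_iff _ hj]

theorem IsImage.apply_length_imagePrefix (hf : IsMarkedBy α f) (hfw : IsImage f w' w) (n : ℕ) :
    w (imagePrefix f w' n).length = α :=
  (hfw.apply_eq_iff hf n (hf.length_pos _)).2 rfl

/-- The block after `f (w' n)` starts with `α`, which cannot occur strictly inside `g (w'' n)`. -/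
theorem length_image_le (hf : IsMarkedBy α f) (hg : IsMarkedBy α g) (hfw : IsImage f w' w)
    (hgw : IsImage g w'' w) {n : ℕ}
    (hn : (imagePrefix f w' n).length = (imagePrefix g w'' n).length) :
    (g (w'' n)).length ≤ (f (w' n)).length := by
  by_contra! hlt
  have hnext := hfw.apply_length_imagePrefix hf (n + 1)
  rw [imagePrefix_succ, List.length_append, hn, hgw.apply_eq_iff hg n hlt] at hnext
  exact (hf.length_pos _).ne' hnext

theorem length_imagePrefix_eq (hf : IsMarkedBy α f) (hg : IsMarkedBy α g)
    (hfw : IsImage f w' w) (hgw : IsImage g w'' w) (n : ℕ) :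
    (imagePrefix f w' n).length = (imagePrefix g w'' n).length := by
  induction n with
  | zero => rfl
  | succ n ih =>
    rw [imagePrefix_succ, imagePrefix_succ, List.length_append, List.length_append, ih,
      le_antisymm (length_image_le hg hf hgw hfw ih.symm) (length_image_le hf hg hfw hgw ih)]

theorem image_eq (hf : IsMarkedBy α f) (hg : IsMarkedBy α g)
    (hfw : IsImage f w' w) (hgw : IsImage g w'' w) (n : ℕ) : f (w' n) = g (w'' n) := by
  have hprefix := length_imagePrefix_eq hf hg hfw hgw
  have hlen : (f (w' n)).length = (g (w'' n)).length := by
    have := hprefix (n + 1)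
    rwa [imagePrefix_succ, imagePrefix_succ, List.length_append, List.length_append, hprefix n,
      Nat.add_left_cancel_iff] at this
  refine List.ext_getElem hlen fun j hjf hjg => ?_
  rw [hfw.getElem_eq n hjf, hgw.getElem_eq n hjg, hprefix n]

end Factorization

end Desubstitution

theorem lsp_desubstitution_unique_general {A : Type*} (w w' w'' : ℕ → A)
    (f g : A → List A) (hf : IsBLSP f) (hg : IsBLSP g)
    (hfw : IsImage f w' w) (hgw : IsImage g w'' w) :
    w' = w'' ∧ ∀ β : A, (∃ i, w' i = β) → f β = g β := by
  obtain ⟨α, hfα⟩ := hf.exists_isMarkedBy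
  obtain ⟨α', hgα'⟩ := hg.exists_isMarkedBy
  obtain rfl : α' = α := by
    simpa using (hgw.apply_length_imagePrefix hgα' 0).symm.trans
      (hfw.apply_length_imagePrefix hfα 0)
  have himage := image_eq hfα hgα' hfw hgw
  have hw : w' = w'' := funext fun n => by
    obtain ⟨-, -, -, hlast⟩ := hfα (w' n)
    obtain ⟨-, -, -, hlast'⟩ := hgα' (w'' n)
    rw [himage n, hlast'] at hlast
    exact (Option.some.inj hlast).symm
  refine ⟨hw, ?_⟩
  rintro β ⟨i, rfl⟩
  rw [himage i, ← hw]

theorem lsp_desubstitution_unique {A : Type*} [Fintype A] (w w' w'' : ℕ → A)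
    (hw : LSPInf w) (f g : A → List A) (hf : IsBLSP f) (hg : IsBLSP g)
    (hfw : IsImage f w' w) (hgw : IsImage g w'' w) :
    w' = w'' ∧ ∀ β : A, (∃ i, w' i = β) → f β = g β :=
  lsp_desubstitution_unique_general w w' w'' f g hf hg hfw hgw
end

section
/- For every bLSP morphism f of A* and every infinite word w over A: if f(w) is LSP, then w is LSP. -/
theorem List.eq_of_append_cons_eq_append_cons {A : Type*} {a : A} {x₁ x₂ z₁ z₂ : List A}
    (h₁ : a ∉ x₁) (h₂ : a ∉ x₂) (h : x₁ ++ a :: z₁ = x₂ ++ a :: z₂) : x₁ = x₂ := by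
  simp only [List.append_eq_append_iff, List.cons_eq_append_iff, List.cons_eq_cons] at h
  rcases h with ⟨c, rfl, ⟨rfl, -⟩ | ⟨d, rfl, rfl, -⟩⟩ | ⟨c, rfl, ⟨rfl, -⟩ | ⟨d, rfl, rfl, -⟩⟩ <;>
    simp_all

theorem List.length_le_length_flatMap {A B : Type*} {f : A → List B} (hf : ∀ a, f a ≠ [])
    (l : List A) : l.length ≤ (l.flatMap f).length := by
  induction l with
  | nil => simp
  | cons a l ih =>
    have := List.length_pos_iff.mpr (hf a)
    simp only [List.flatMap_cons, List.length_append, List.length_cons]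
    omega

section Words

variable {A : Type*}

theorem prefI_iff_map_range_eq {u : List A} {w : ℕ → A} :
    PrefI u w ↔ (List.range u.length).map w = u := by
  refine ⟨fun h => List.ext_getElem (by simp) fun i _ hi => by simp [h i hi], ?_⟩
  rintro h i hi
  rw [List.getElem_of_eq h.symm hi]
  simp

theorem prefI_iff_prefix {u : List A} {w : ℕ → A} {n : ℕ} (hn : u.length ≤ n) :
    PrefI u w ↔ u <+: (List.range n).map w := by
  rw [prefI_iff_map_range_eq, List.prefix_iff_eq_take, ← List.map_take, List.take_range,
    Nat.min_eq_left hn, eq_comm]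

theorem PrefI.factorI_of_infix {p u : List A} {v : ℕ → A} (hp : PrefI p v) (h : u <:+: p) :
    FactorI v u := by
  obtain ⟨s, t, rfl⟩ := h
  refine ⟨s.length, fun i hi => ?_⟩
  have := hp (s.length + i) (by simp; omega)
  simpa [List.getElem_append_right, List.getElem_append_left hi] using this

theorem FactorI.exists_append_infix {u : List A} {w : ℕ → A} (h : FactorI w u) :
    ∃ c n, u ++ [c] <:+: (List.range n).map w := by
  obtain ⟨k, hk⟩ := h
  have hu : (List.range u.length).map (fun i => w (k + i)) = u :=
    prefI_iff_map_range_eq.mp hk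
  obtain ⟨m, hm⟩ : ∃ m, u.length = m := ⟨_, rfl⟩
  rw [hm] at hu
  subst hu
  refine ⟨w (k + m), k + (m + 1), (List.range k).map w, [], ?_⟩
  simp [List.range_add, List.range_succ, Function.comp_def]

end Words

section Morphism

variable {A : Type*} {f : A → List A} {α : A}

theorem bLSP_exists_eq_cons (hα : f α = [α]) (hstep : ∀ β, β ≠ α → ∃ γ, f β = f γ ++ [β])
    (β : A) : ∃ t, f β = α :: t ∧ α ∉ t := by
  induction hn : (f β).length using Nat.strong_induction_on generalizing β with
  | _ n ih =>
  by_cases hβ : β = α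
  · exact ⟨[], by simp [hβ, hα], by simp⟩
  obtain ⟨γ, hγ⟩ := hstep β hβ
  obtain ⟨t, ht, hαt⟩ := ih (f γ).length (by simp [← hn, hγ]) γ rfl
  exact ⟨t ++ [β], by simp [hγ, ht], by simp [hαt, Ne.symm hβ]⟩

theorem bLSP_exists_eq_append_singleton (hα : f α = [α])
    (hstep : ∀ β, β ≠ α → ∃ γ, f β = f γ ++ [β]) (β : A) : ∃ s, f β = s ++ [β] := by
  by_cases hβ : β = α
  · exact ⟨[], by simp [hβ, hα]⟩
  · obtain ⟨γ, hγ⟩ := hstep β hβ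
    exact ⟨f γ, hγ⟩

theorem injective_of_exists_eq_append_singleton (hlast : ∀ β, ∃ s, f β = s ++ [β]) :
    Function.Injective f := by
  intro β₁ β₂ h
  obtain ⟨s₁, h₁⟩ := hlast β₁
  obtain ⟨s₂, h₂⟩ := hlast β₂
  rw [h₁, h₂] at h
  exact List.singleton_inj.mp (List.append_inj' h rfl).2

theorem exists_flatMap_append_eq_cons (hcons : ∀ β, ∃ t, f β = α :: t ∧ α ∉ t) (l : List A) :
    ∃ r, l.flatMap f ++ [α] = α :: r := by
  cases l with
  | nil => exact ⟨[], rfl⟩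
  | cons c l =>
    obtain ⟨t, ht, -⟩ := hcons c
    exact ⟨t ++ (l.flatMap f ++ [α]), by simp [ht]⟩

theorem eq_of_append_cons_prefix (hcons : ∀ β, ∃ t, f β = α :: t ∧ α ∉ t)
    (hinj : Function.Injective f) {c d : A} {r s : List A}
    (h : f c ++ α :: r <+: f d ++ α :: s) : c = d := by
  obtain ⟨tc, hc, hαc⟩ := hcons c
  obtain ⟨td, hd, hαd⟩ := hcons d
  obtain ⟨z, hz⟩ := h
  rw [hc, hd] at hz
  simp only [List.cons_append, List.append_assoc, List.cons.injEq, true_and] at hz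
  exact hinj (by rw [hc, hd, List.eq_of_append_cons_eq_append_cons hαc hαd hz])

theorem prefix_of_flatMap_append_prefix (hcons : ∀ β, ∃ t, f β = α :: t ∧ α ∉ t)
    (hinj : Function.Injective f) {u x : List A} (hlen : u.length < x.length)
    (h : u.flatMap f ++ [α] <+: x.flatMap f) : u <+: x := by
  induction u generalizing x with
  | nil => exact List.nil_prefix
  | cons c u ih =>
    obtain _ | ⟨d, _ | ⟨e, x⟩⟩ := x
    · simp at hlen
    · simp at hlen
    obtain ⟨r, hr⟩ := exists_flatMap_append_eq_cons hcons u
    obtain ⟨te, he, -⟩ := hcons e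
    have hcd : c = d := by
      refine eq_of_append_cons_prefix hcons hinj (r := r) (s := te ++ x.flatMap f) ?_
      simpa [← hr, he] using h
    subst hcd
    simp only [List.flatMap_cons, List.append_assoc, List.prefix_append_right_inj] at h
    exact List.cons_prefix_cons.mpr ⟨rfl, ih (by simpa using hlen) (by simpa using h)⟩

theorem FactorI.cons_flatMap_append_of_isImage (hcons : ∀ β, ∃ t, f β = α :: t ∧ α ∉ t)
    (hlast : ∀ β, ∃ s, f β = s ++ [β]) {w v : ℕ → A} (hv : IsImage f w v) {x : A}
    {u : List A} (h : FactorI w (x :: u)) : FactorI v (x :: (u.flatMap f ++ [α])) := by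
  obtain ⟨c, n, hinf⟩ := h.exists_append_infix
  obtain ⟨s, hs⟩ := hlast x
  obtain ⟨t, ht, -⟩ := hcons c
  refine (hv n).factorI_of_infix (List.IsInfix.trans ⟨s, t, ?_⟩ (hinf.flatMap f))
  simp [hs, ht]

theorem PrefI.of_flatMap_append_of_isImage (hcons : ∀ β, ∃ t, f β = α :: t ∧ α ∉ t)
    (hinj : Function.Injective f) {w v : ℕ → A} (hv : IsImage f w v) {u : List A}
    (h : PrefI (u.flatMap f ++ [α]) v) : PrefI u w := by
  have hne : ∀ β, f β ≠ [] := fun β => by obtain ⟨t, ht, -⟩ := hcons β; simp [ht]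
  set n := (u.flatMap f ++ [α]).length
  have hu : u.length < n := by
    simpa [n, Nat.lt_succ_iff] using List.length_le_length_flatMap hne u
  have hx : n ≤ (((List.range n).map w).flatMap f).length := by
    simpa using List.length_le_length_flatMap hne ((List.range n).map w)
  have himage : u.flatMap f ++ [α] <+: ((List.range n).map w).flatMap f := by
    simpa only [prefI_iff_map_range_eq.mp (hv n)] using (prefI_iff_prefix hx).mp h
  exact (prefI_iff_prefix hu.le).mpr <|
    prefix_of_flatMap_append_prefix hcons hinj (by simpa using hu) himage

end Morphism

theorem lsp_of_image_lsp {A : Type*} (f : A → List A) (hf : IsBLSP f)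
    (w v : ℕ → A) (hv : IsImage f w v) (hLSP : LSPInf v) : LSPInf w := by
  obtain ⟨α, hα, hstep⟩ := hf
  have hcons := bLSP_exists_eq_cons hα hstep
  have hlast := bLSP_exists_eq_append_singleton hα hstep
  have hinj := injective_of_exists_eq_append_singleton hlast
  intro u a b hab ha hb
  have hspecial : PrefI (u.flatMap f ++ [α]) v :=
    hLSP _ a b hab (ha.cons_flatMap_append_of_isImage hcons hlast hv)
      (hb.cons_flatMap_append_of_isImage hcons hlast hv)
  exact hspecial.of_flatMap_append_of_isImage hcons hinj hv
end

section
/- Let A = {a, b} be a two-letter alphabet (a ≠ b), and let τ_a and τ_b be the endomorphisms of A* defined by τ_a(a) = a, τ_a(b) = ab and τ_b(a) = ba, τ_b(b) = b. An infinite word w over A is LSP if and only if w is {τ_a, τ_b}-adic, i.e., there exist a sequence (f_n)_{n≥1} with each f_n ∈ {τ_a, τ_b} and a sequence of infinite words (w_n)_{n≥1} over A with w_1 = w and w_n = f_n(w_{n+1}) for all n ≥ 1. -/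
/-!
Fix a letter `c` and let `τ` be `τ_c : c ↦ c, x ↦ c x` (so `τ_a`, `τ_b` are the two morphisms
of the statement). A word is a `τ`-image exactly when it starts with `c` and has no two
consecutive letters other than `c`; its preimage is then read off block by block.
If `x u` and `y u` occur in `v`, then `x τ(u) c` and `y τ(u) c` occur in `τ(v)`, and reading back
`τ(u) c` gives `u`: so `τ(v)` LSP implies `v` LSP. Conversely a nonempty left special factor of
`τ(v)` starts with `c`, hence at two block boundaries, after blocks ending with the two distinct
letters; decoding it gives a strictly shorter left special factor of `v` which determines it.
Descending along the directive sequence, induction on the length shows that an `{τ_a, τ_b}`-adic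
word is LSP. For the converse, a binary LSP word starting with `c` cannot contain `c' c'`, since
then `c'` would be left special (the first `c'` follows a `c`) but not a prefix; so it is a
`τ_c`-image of an LSP word, and iterating gives the directive sequence.
-/

section Words

variable {A : Type*}

def shift (w : ℕ → A) (k : ℕ) : ℕ → A := fun i => w (k + i)

@[simp]
theorem shift_apply (w : ℕ → A) (k i : ℕ) : shift w k i = w (k + i) := rfl

@[simp]
theorem shift_zero (w : ℕ → A) : shift w 0 = w := by
  funext i
  simp

theorem shift_shift (w : ℕ → A) (j k : ℕ) : shift (shift w j) k = shift w (j + k) := by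
  funext i
  simp [Nat.add_assoc]

theorem prefI_nil (w : ℕ → A) : PrefI [] w := fun _ h => absurd h (Nat.not_lt_zero _)

theorem prefI_append {u u' : List A} {w : ℕ → A} :
    PrefI (u ++ u') w ↔ PrefI u w ∧ PrefI u' (shift w u.length) := by
  constructor
  · intro h
    refine ⟨fun i hi => ?_, fun i hi => ?_⟩
    · rw [← h i (by simp; omega), List.getElem_append_left hi]
    · rw [shift_apply, ← h (u.length + i) (by simp; omega), List.getElem_append_right (by omega)]
      simp
  · rintro ⟨h, h'⟩ i hi
    rcases lt_or_ge i u.length with hi' | hi'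
    · rw [List.getElem_append_left hi']
      exact h i hi'
    · rw [List.getElem_append_right hi']
      simpa [Nat.add_sub_cancel' hi'] using h' (i - u.length) (by simp at hi; omega)

theorem prefI_cons {x : A} {u : List A} {w : ℕ → A} :
    PrefI (x :: u) w ↔ x = w 0 ∧ PrefI u (shift w 1) := by
  rw [← List.singleton_append, prefI_append]
  simp [PrefI]

theorem factorI_iff {w : ℕ → A} {u : List A} : FactorI w u ↔ ∃ k, PrefI u (shift w k) :=
  Iff.rfl

theorem PrefI.of_isPrefix {u u' : List A} {w : ℕ → A} (h : PrefI u' w) (hu : u <+: u') :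
    PrefI u w := by
  obtain ⟨t, rfl⟩ := hu
  exact (prefI_append.1 h).1

section Image

variable {B : Type*}

theorem flatMap_map_range_succ (f : A → List B) (v : ℕ → A) (n : ℕ) :
    ((List.range (n + 1)).map v).flatMap f =
      f (v 0) ++ ((List.range n).map (shift v 1)).flatMap f := by
  rw [List.range_succ_eq_map, List.map_cons, List.flatMap_cons, List.map_map]
  congr 3
  funext i
  simp [Nat.add_comm]

variable {f : A → List B}

theorem IsImage.tail {v : ℕ → A} {w : ℕ → B} (h : IsImage f v w) :
    PrefI (f (v 0)) w ∧ IsImage f (shift v 1) (shift w (f (v 0)).length) := by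
  have h_succ (n : ℕ) := prefI_append.1 (flatMap_map_range_succ f v n ▸ h (n + 1))
  exact ⟨by simpa using (h_succ 0).1, fun n => (h_succ n).2⟩

theorem IsImage.of_invariant (R : (ℕ → A) → (ℕ → B) → Prop)
    (hR : ∀ v w, R v w → PrefI (f (v 0)) w ∧ R (shift v 1) (shift w (f (v 0)).length))
    {v : ℕ → A} {w : ℕ → B} (h : R v w) : IsImage f v w := by
  intro n
  induction n generalizing v w with
  | zero => exact prefI_nil w
  | succ n ih =>
    rw [flatMap_map_range_succ, prefI_append]
    exact ⟨(hR v w h).1, ih (hR v w h).2⟩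

theorem IsImage.exists_shift {v : ℕ → A} {w : ℕ → B} (h : IsImage f v w) (j : ℕ) :
    ∃ k, IsImage f (shift v j) (shift w k) := by
  induction j with
  | zero => exact ⟨0, by simpa using h⟩
  | succ j ih =>
    obtain ⟨k, hk⟩ := ih
    refine ⟨k + (f (v j)).length, ?_⟩
    simpa [shift_shift] using hk.tail.2

end Image

section Tau

variable [DecidableEq A] {c : A}

def tau (c x : A) : List A := if x = c then [c] else [c, x]

@[simp]
theorem tau_self (c : A) : tau c c = [c] := if_pos rfl

theorem tau_of_ne {x : A} (h : x ≠ c) : tau c x = [c, x] := if_neg h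

theorem exists_tau_eq_append (c x : A) : ∃ t, tau c x = t ++ [x] := by
  by_cases h : x = c
  · exact ⟨[], by simp [h]⟩
  · exact ⟨[c], by simp [tau_of_ne h]⟩

theorem exists_flatMap_tau_append_eq_cons (c : A) (l : List A) :
    ∃ t, l.flatMap (tau c) ++ [c] = c :: t := by
  rcases l with _ | ⟨x, l⟩
  · exact ⟨[], rfl⟩
  · by_cases h : x = c <;> simp [h, tau_of_ne]

/-- Decodes a factor of a `tau c`-image that starts at a block boundary; a final lone `c` is
dropped, since its block may continue past the end of the factor. -/
def desubst (c : A) : List A → List A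
  | [] => []
  | [_] => []
  | _ :: y :: rest => if y = c then c :: desubst c (y :: rest) else y :: desubst c rest

theorem length_desubst_le (c : A) (u : List A) : (desubst c u).length ≤ u.length - 1 := by
  fun_induction desubst c u <;> simp_all; omega

theorem desubst_flatMap_tau_append (l : List A) : desubst c (l.flatMap (tau c) ++ [c]) = l := by
  induction l with
  | nil => rfl
  | cons x l ih =>
    obtain ⟨t, ht⟩ := exists_flatMap_tau_append_eq_cons c l
    by_cases hx : x = c
    · subst hx
      simp only [List.flatMap_cons, tau_self, List.cons_append, List.nil_append]
      rw [ht, desubst, if_pos rfl, ← ht, ih]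
    · simp only [List.flatMap_cons, tau_of_ne hx, List.cons_append, List.nil_append]
      rw [desubst, if_neg hx, ih]

variable {v w : ℕ → A}

theorem IsImage.head (h : IsImage (tau c) v w) : w 0 = c := by
  have := h.tail.1 0
  by_cases hv : v 0 = c <;> simp_all [tau_of_ne]

theorem IsImage.tail_of_eq (h : IsImage (tau c) v w) (hv : v 0 = c) :
    IsImage (tau c) (shift v 1) (shift w 1) := by
  simpa [hv] using h.tail.2

theorem IsImage.tail_of_ne (h : IsImage (tau c) v w) (hv : v 0 ≠ c) :
    w 1 = v 0 ∧ IsImage (tau c) (shift v 1) (shift w 2) := by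
  obtain ⟨h₁, h₂⟩ := h.tail
  rw [tau_of_ne hv] at h₁ h₂
  exact ⟨(h₁ 1 (by simp)).symm, h₂⟩

theorem IsImage.succ_eq_iff (h : IsImage (tau c) v w) : w 1 = c ↔ v 0 = c := by
  by_cases hv : v 0 = c
  · simpa [hv] using (h.tail_of_eq hv).head
  · simp [(h.tail_of_ne hv).1, hv]

theorem IsImage.prefI_flatMap_tau_append {l : List A} (h : IsImage (tau c) v w) (hl : PrefI l v) :
    PrefI (l.flatMap (tau c) ++ [c]) w := by
  induction l generalizing v w with
  | nil => simpa [PrefI] using h.head.symm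
  | cons x l ih =>
    obtain ⟨rfl, hl'⟩ := prefI_cons.1 hl
    rw [List.flatMap_cons, List.append_assoc, prefI_append]
    exact ⟨h.tail.1, ih h.tail.2 hl'⟩

theorem IsImage.prefI_desubst (h : IsImage (tau c) v w) {u : List A} (hu : PrefI u w) :
    PrefI (desubst c u) v := by
  induction u using desubst.induct c generalizing v w with
  | case1 | case2 => exact prefI_nil v
  | case3 x rest ih =>
    obtain ⟨-, hrest⟩ := prefI_cons.1 hu
    have hw₁ := (prefI_cons.1 hrest).1
    have hv : v 0 = c := h.succ_eq_iff.1 (by simpa using hw₁.symm)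
    rw [desubst, if_pos rfl]
    exact prefI_cons.2 ⟨hv.symm, ih (h.tail_of_eq hv) hrest⟩
  | case4 x y rest hy ih =>
    obtain ⟨-, hu'⟩ := prefI_cons.1 hu
    obtain ⟨hw₁, hrest⟩ := prefI_cons.1 hu'
    have hv : v 0 ≠ c := fun hv => hy (by simpa [h.succ_eq_iff.2 hv] using hw₁)
    obtain ⟨hwv, h₂⟩ := h.tail_of_ne hv
    rw [desubst, if_neg hy]
    exact prefI_cons.2 ⟨by simpa [hwv] using hw₁, ih h₂ (by simpa [shift_shift] using hrest)⟩

theorem IsImage.isPrefix_flatMap_tau_desubst (h : IsImage (tau c) v w) {u : List A}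
    (hu : PrefI u w) : u <+: (desubst c u).flatMap (tau c) ++ [c] := by
  induction u using desubst.induct c generalizing v w with
  | case1 => exact List.nil_prefix
  | case2 x => simp [desubst, (prefI_cons.1 hu).1, h.head]
  | case3 x rest ih =>
    obtain ⟨rfl, hrest⟩ := prefI_cons.1 hu
    have hv : v 0 = c := h.succ_eq_iff.1 (by simpa using (prefI_cons.1 hrest).1.symm)
    rw [desubst, if_pos rfl, List.flatMap_cons, tau_self, h.head]
    simpa [List.cons_prefix_cons] using ih (h.tail_of_eq hv) hrest
  | case4 x y rest hy ih =>
    obtain ⟨rfl, hu'⟩ := prefI_cons.1 hu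
    obtain ⟨hw₁, hrest⟩ := prefI_cons.1 hu'
    have hv : v 0 ≠ c := fun hv => hy (by simpa [h.succ_eq_iff.2 hv] using hw₁)
    rw [desubst, if_neg hy, List.flatMap_cons, tau_of_ne hy, h.head]
    simpa [List.cons_prefix_cons] using ih (h.tail_of_ne hv).2 (by simpa [shift_shift] using hrest)

/-- Position `k` either starts the block of letter `s`, or is the second letter of that block. -/
theorem IsImage.exists_block (h : IsImage (tau c) v w) (k : ℕ) :
    ∃ s, IsImage (tau c) (shift v s) (shift w k) ∨
      v s ≠ c ∧ v s = w k ∧ IsImage (tau c) (shift v (s + 1)) (shift w (k + 1)) := by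
  induction k with
  | zero => exact ⟨0, .inl (by simpa using h)⟩
  | succ k ih =>
    obtain ⟨s, hs | ⟨-, -, hs⟩⟩ := ih
    · by_cases hv : v s = c
      · exact ⟨s + 1, .inl (by simpa [shift_shift] using hs.tail_of_eq (by simpa using hv))⟩
      · obtain ⟨hw, hs'⟩ := hs.tail_of_ne (by simpa using hv)
        refine ⟨s, .inr ⟨hv, by simpa [Nat.add_comm] using hw.symm, ?_⟩⟩
        simpa only [shift_shift, Nat.add_assoc] using hs'
    · exact ⟨s + 1, .inl hs⟩

theorem IsImage.eq_or_succ_eq (h : IsImage (tau c) v w) (k : ℕ) : w k = c ∨ w (k + 1) = c := by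
  obtain ⟨s, hs | ⟨-, -, hs⟩⟩ := h.exists_block k
  · exact .inl (by simpa using hs.head)
  · exact .inr (by simpa using hs.head)

theorem IsImage.exists_block_end (h : IsImage (tau c) v w) {k : ℕ} (hk : w (k + 1) = c) :
    ∃ s, v s = w k ∧ IsImage (tau c) (shift v (s + 1)) (shift w (k + 1)) := by
  obtain ⟨s, hs | ⟨-, hs⟩⟩ := h.exists_block k
  · by_cases hv : v s = c
    · refine ⟨s, by simpa [hv] using hs.head.symm, ?_⟩
      simpa [shift_shift] using hs.tail_of_eq (by simpa using hv)
    · have := (hs.tail_of_ne (by simpa using hv)).1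
      simp_all
  · exact ⟨s, hs⟩

theorem IsImage.factorI_cons_desubst (h : IsImage (tau c) v w) {x : A} {u : List A} {k : ℕ}
    (hk : PrefI (x :: u) (shift w k)) (hc : w (k + 1) = c) :
    FactorI v (x :: desubst c u) ∧ u <+: (desubst c u).flatMap (tau c) ++ [c] := by
  obtain ⟨s, hs, h'⟩ := h.exists_block_end hc
  obtain ⟨hx, hu⟩ := prefI_cons.1 hk
  rw [shift_shift] at hu
  refine ⟨factorI_iff.2 ⟨s, prefI_cons.2 ⟨by simpa [hs] using hx, ?_⟩⟩,
    h'.isPrefix_flatMap_tau_desubst hu⟩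
  simpa [shift_shift] using h'.prefI_desubst hu

theorem IsImage.factorI_desubst (h : IsImage (tau c) v w) {u : List A} (hu : u ≠ [])
    {x y : A} (hxy : x ≠ y) (hx : FactorI w (x :: u)) (hy : FactorI w (y :: u)) :
    FactorI v (x :: desubst c u) ∧ FactorI v (y :: desubst c u) ∧
      (PrefI (desubst c u) v → PrefI u w) := by
  obtain ⟨k, hk⟩ := hx
  obtain ⟨k', hk'⟩ := hy
  obtain ⟨z, u, rfl⟩ := List.exists_cons_of_ne_nil hu
  have hz : ∀ {j a}, PrefI (a :: z :: u) (shift w j) → z = w (j + 1) ∧ a = w j := fun hj => by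
    obtain ⟨ha, hj⟩ := prefI_cons.1 hj
    simpa [ha] using (prefI_cons.1 hj).1
  have hzc : z = c := by
    by_contra hzc
    have ha : ∀ {j a}, PrefI (a :: z :: u) (shift w j) → a = c := fun hj => by
      obtain ⟨h₁, h₂⟩ := hz hj
      exact h₂ ▸ (h.eq_or_succ_eq _).resolve_right (h₁ ▸ hzc)
    exact hxy ((ha hk).trans (ha hk').symm)
  obtain ⟨hx, hpre⟩ := h.factorI_cons_desubst hk ((hz hk).1 ▸ hzc)
  obtain ⟨hy, -⟩ := h.factorI_cons_desubst hk' ((hz hk').1 ▸ hzc)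
  exact ⟨hx, hy, fun hd => (h.prefI_flatMap_tau_append hd).of_isPrefix hpre⟩

theorem IsImage.lspInf (h : IsImage (tau c) v w) (hw : LSPInf w) : LSPInf v := by
  intro u x y hxy hx hy
  have lift : ∀ {z}, FactorI v (z :: u) → FactorI w (z :: (u.flatMap (tau c) ++ [c])) := by
    intro z hz
    obtain ⟨j, hj⟩ := factorI_iff.1 hz
    obtain ⟨k, hk⟩ := h.exists_shift j
    obtain ⟨t, ht⟩ := exists_tau_eq_append c z
    have := hk.prefI_flatMap_tau_append hj
    rw [List.flatMap_cons, ht, List.append_assoc, List.append_assoc, List.singleton_append,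
      prefI_append, shift_shift] at this
    exact factorI_iff.2 ⟨_, this.2⟩
  simpa [desubst_flatMap_tau_append] using h.prefI_desubst (hw _ x y hxy (lift hx) (lift hy))

def dropBlock (c : A) (w : ℕ → A) : ℕ → A := shift w (tau c (w 1)).length

/-- The `n`-th letter of the preimage is the letter right after the `n`-th block boundary. -/
def desubstInf (c : A) (w : ℕ → A) (n : ℕ) : A := (dropBlock c)^[n] w 1

theorem desubstInf_dropBlock (c : A) (w : ℕ → A) :
    desubstInf c (dropBlock c w) = shift (desubstInf c w) 1 := by
  funext n
  simp [desubstInf, Nat.add_comm 1 n, Function.iterate_succ_apply]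

theorem isImage_desubstInf (h0 : w 0 = c) (hw : ∀ k, w k = c ∨ w (k + 1) = c) :
    IsImage (tau c) (desubstInf c w) w := by
  refine IsImage.of_invariant (fun v u => v = desubstInf c u ∧ u 0 = c ∧
    ∀ k, u k = c ∨ u (k + 1) = c) ?_ ⟨rfl, h0, hw⟩
  rintro _ u ⟨rfl, h0, hw⟩
  refine ⟨?_, (desubstInf_dropBlock c u).symm, ?_, fun k => ?_⟩
  · by_cases h1 : u 1 = c
    · simpa [desubstInf, h1, PrefI] using h0.symm
    · simp [desubstInf, tau_of_ne h1, prefI_cons, h0, prefI_nil]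
  · by_cases h1 : u 1 = c
    · simp [desubstInf, h1]
    · simpa [desubstInf, tau_of_ne h1, h1] using hw 1
  · simpa [Nat.add_assoc] using hw (_ + k)

end Tau

theorem lspInf_of_forall_isImage_tau [DecidableEq A] {W : ℕ → ℕ → A}
    (hW : ∀ n, ∃ c, IsImage (tau c) (W (n + 1)) (W n)) : LSPInf (W 0) := by
  suffices ∀ L n (u : List A), u.length < L → ∀ x y, x ≠ y →
      FactorI (W n) (x :: u) → FactorI (W n) (y :: u) → PrefI u (W n) from
    fun u x y => this _ 0 u (Nat.lt_succ_self _) x y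
  intro L
  induction L with
  | zero => intro _ _ hu; exact absurd hu (Nat.not_lt_zero _)
  | succ L ih =>
    intro n u hu x y hxy hx hy
    rcases eq_or_ne u [] with rfl | hne
    · exact prefI_nil _
    obtain ⟨c, h⟩ := hW n
    obtain ⟨hx', hy', hprefix⟩ := h.factorI_desubst hne hxy hx hy
    have hlen : (desubst c u).length < L := by
      have := length_desubst_le c u
      have := List.length_pos_of_ne_nil hne
      omega
    exact hprefix (ih (n + 1) _ hlen x y hxy hx' hy')

theorem exists_eq_and_succ_ne {w : ℕ → A} {c : A} (h0 : w 0 = c) {k : ℕ} (hk : w k ≠ c) :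
    ∃ m, w m = c ∧ w (m + 1) ≠ c := by
  induction k with
  | zero => exact absurd h0 hk
  | succ k ih =>
    by_cases h : w k = c
    exacts [⟨k, h, hk⟩, ih h]

theorem LSPInf.eq_or_succ_eq_head {w : ℕ → A} (hw : LSPInf w) {a b : A}
    (hA : ∀ x : A, x = a ∨ x = b) (k : ℕ) : w k = w 0 ∨ w (k + 1) = w 0 := by
  have eq_of_ne : ∀ {x y z : A}, x ≠ z → y ≠ z → x = y := by
    intro x y z
    rcases hA x with rfl | rfl <;> rcases hA y with rfl | rfl <;> rcases hA z with rfl | rfl <;>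
      simp
  by_contra! ⟨h₁, h₂⟩
  obtain ⟨m, hm, hm₁⟩ := exists_eq_and_succ_ne rfl h₁
  have hpair : ∀ j, w (j + 1) = w k → FactorI w [w j, w k] := fun j hj =>
    factorI_iff.2 ⟨j, prefI_cons.2 ⟨by simp, prefI_cons.2 ⟨by simp [hj], prefI_nil _⟩⟩⟩
  have := hw [w k] (w 0) (w k) (Ne.symm h₁) (hm ▸ hpair m (eq_of_ne hm₁ h₁))
    (hpair k (eq_of_ne h₂ h₁)) 0 (by simp)
  exact h₁ this

theorem exists_eq_tau_iff [DecidableEq A] {a b : A} (hab : a ≠ b) (hA : ∀ x : A, x = a ∨ x = b)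
    (g : A → List A) :
    ((g a = [a] ∧ g b = [a, b]) ∨ (g a = [b, a] ∧ g b = [b])) ↔ ∃ c, g = tau c := by
  constructor
  · rintro (⟨h₁, h₂⟩ | ⟨h₁, h₂⟩)
    · exact ⟨a, funext fun x => by rcases hA x with rfl | rfl <;> simp [h₁, h₂, tau_of_ne hab.symm]⟩
    · exact ⟨b, funext fun x => by rcases hA x with rfl | rfl <;> simp [h₁, h₂, tau_of_ne hab]⟩
  · rintro ⟨c, rfl⟩
    rcases hA c with rfl | rfl <;> simp [tau_of_ne hab, tau_of_ne hab.symm]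

end Words

theorem binary_lsp_characterization {A : Type*} (a b : A) (hab : a ≠ b)
    (hA : ∀ x : A, x = a ∨ x = b) (w : ℕ → A) :
    LSPInf w ↔
      ∃ (f : ℕ → A → List A) (W : ℕ → ℕ → A),
        (∀ n, (f n a = [a] ∧ f n b = [a, b]) ∨ (f n a = [b, a] ∧ f n b = [b])) ∧
        W 0 = w ∧ ∀ n, IsImage (f n) (W (n + 1)) (W n) := by
  classical
  constructor
  · intro hw
    let step : (ℕ → A) → ℕ → A := fun u => desubstInf (u 0) u
    have isImage_step {u : ℕ → A} (hu : LSPInf u) : IsImage (tau (u 0)) (step u) u :=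
      isImage_desubstInf rfl (hu.eq_or_succ_eq_head hA)
    have lspInf_iterate (n : ℕ) : LSPInf (step^[n] w) := by
      induction n with
      | zero => exact hw
      | succ n ih => simpa [Function.iterate_succ_apply'] using (isImage_step ih).lspInf ih
    refine ⟨fun n => tau (step^[n] w 0), fun n => step^[n] w,
      fun n => (exists_eq_tau_iff hab hA _).2 ⟨_, rfl⟩, rfl, fun n => ?_⟩
    simpa [Function.iterate_succ_apply'] using isImage_step (lspInf_iterate n)
  · rintro ⟨f, W, hf, rfl, hW⟩
    refine lspInf_of_forall_isImage_tau fun n => ?_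
    obtain ⟨c, hc⟩ := (exists_eq_tau_iff hab hA (f n)).1 (hf n)
    exact ⟨c, hc ▸ hW n⟩
end

section
/- Let f be a bLSP morphism of A* and let w be an infinite word over A. If the empty word is an (a, b, c, β, γ)-fragility of f(w), then a = first(f) and the words βb and γc are factors of words f(δ) for letters δ occurring in w. -/
/-- `u` is an `(a, b, c, β, γ)`-fragility of `w`: `ua` is a prefix of `w` while
`βub` and `γuc` are factors of `w`. -/
def FragilityAt {A : Type*} (w : ℕ → A) (u : List A) (a b c β γ : A) : Prop :=
  PrefI (u ++ [a]) w ∧ FactorI w (β :: (u ++ [b])) ∧ FactorI w (γ :: (u ++ [c]))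

/-- `w` is `(a, b, c)`-fragile. -/
def Fragile {A : Type*} (w : ℕ → A) (a b c : A) : Prop :=
  ∃ β γ, β ≠ γ ∧ ∃ u, FragilityAt w u a b c β γ

/-- `f` is LSP `(a, b, c)`-breaking: the image of every `(a, b, c)`-fragile
infinite LSP word under `f` is not LSP. -/
def Breaking {A : Type*} (f : A → List A) (a b c : A) : Prop :=
  ∀ w : ℕ → A, LSPInf w → Fragile w a b c → ∀ v, IsImage f w v → ¬ LSPInf v

/-!
Every image `f δ` under a bLSP morphism starts with `first(f)`: either `δ = first(f)`, or
`f δ = f γ δ` with `f γ` shorter. Hence `f(w)` starts with `first(f)`, which forces `a = first(f)`,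
and a length-two factor `βb` of `f(w)` with `b ≠ first(f)` cannot straddle two consecutive blocks
`f(w i) f(w (i+1))`, so it lies inside one of them.
-/

namespace List

variable {A : Type*}

theorem pair_infix_append {x y : A} {s t : List A} (h : [x, y] <:+: s ++ t) :
    [x, y] <:+: s ∨ [x, y] <:+: t ∨ [y] <+: t := by
  induction s with
  | nil => exact .inr (.inl h)
  | cons a s ih =>
    rcases infix_cons_iff.mp h with hpre | hinf
    · cases s with
      | nil => exact .inr (.inr (by simpa using hpre : x = a ∧ [y] <+: t).2)
      | cons b s =>
        obtain ⟨rfl, rfl⟩ : x = a ∧ y = b := by simpa using hpre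
        exact .inl (prefix_append [x, y] s).isInfix
    · rcases ih hinf with h' | h' | h'
      · exact .inl (h'.trans (suffix_cons a s).isInfix)
      · exact .inr (.inl h')
      · exact .inr (.inr h')

theorem exists_pair_infix_of_infix_flatMap {B : Type*} {f : B → List A} {α x y : A}
    (hy : y ≠ α) {l : List B} (hf : ∀ δ ∈ l, (f δ).head? = some α)
    (h : [x, y] <:+: l.flatMap f) : ∃ δ ∈ l, [x, y] <:+: f δ := by
  induction l with
  | nil => simp at h
  | cons δ l ih =>
    rw [flatMap_cons] at h
    rcases pair_infix_append h with h' | h' | h'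
    · exact ⟨δ, mem_cons_self, h'⟩
    · obtain ⟨δ', hδ', h''⟩ := ih (fun δ' hδ' => hf δ' (mem_cons_of_mem δ hδ')) h'
      exact ⟨δ', mem_cons_of_mem δ hδ', h''⟩
    · cases l with
      | nil => simp at h'
      | cons ε l =>
        obtain ⟨t, ht⟩ : ∃ t, f ε = α :: t := by
          simpa [head?_eq_some_iff] using hf ε (by simp)
        simp [ht, hy] at h'

theorem length_le_length_flatMap_s13 {B : Type*} {f : B → List A} (hf : ∀ δ, f δ ≠ [])
    (l : List B) : l.length ≤ (l.flatMap f).length := by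
  induction l with
  | nil => simp
  | cons δ l ih =>
    have := length_pos_iff.mpr (hf δ)
    simp only [flatMap_cons, length_append, length_cons]
    omega

end List

section Words

variable {A : Type*}

theorem head?_eq_of_isBLSP {f : A → List A} {α : A} (hα : f α = [α])
    (hstep : ∀ β, β ≠ α → ∃ γ, f β = f γ ++ [β]) (δ : A) : (f δ).head? = some α := by
  induction hn : (f δ).length using Nat.strong_induction_on generalizing δ with
  | _ n ih =>
  by_cases hδ : δ = α
  · simp [hδ, hα]
  · obtain ⟨γ, hγ⟩ := hstep δ hδ
    have hγα : (f γ).head? = some α := ih _ (by simp [← hn, hγ]) γ rfl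
    simp [hγ, hγα]

theorem PrefI.infix_of_getElem_eq {p u : List A} {v : ℕ → A} {k : ℕ} (hp : PrefI p v)
    (hk : ∀ i (h : i < u.length), u[i] = v (k + i)) (hlen : k + u.length ≤ p.length) :
    u <:+: p := by
  have hu : u = (p.drop k).take u.length := by
    apply List.ext_getElem
    · simp only [List.length_take, List.length_drop]
      omega
    · intro i h1 _
      rw [List.getElem_take, List.getElem_drop, hk i h1]
      exact (hp (k + i) (by omega)).symm
  rw [hu]
  exact ((p.drop k).take_prefix u.length).isInfix.trans (p.drop_suffix k).isInfix

namespace IsImage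

variable {f : A → List A} {w v : ℕ → A}

theorem exists_infix_of_factorI (hv : IsImage f w v) (hf : ∀ δ, f δ ≠ []) {u : List A}
    (hu : FactorI v u) : ∃ n, u <:+: ((List.range n).map w).flatMap f := by
  obtain ⟨k, hk⟩ := hu
  refine ⟨k + u.length, (hv _).infix_of_getElem_eq hk ?_⟩
  simpa using List.length_le_length_flatMap_s13 hf ((List.range (k + u.length)).map w)

theorem head_eq (hv : IsImage f w v) {α : A} (hα : ∀ δ, (f δ).head? = some α) :
    v 0 = α := by
  obtain ⟨t, ht⟩ : ∃ t, f (w 0) = α :: t := by simpa [List.head?_eq_some_iff] using hα (w 0)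
  have h0 := hv 1 0 (by simp [ht])
  simp only [List.range_one, List.map_singleton, List.flatMap_singleton, ht,
    List.getElem_cons_zero] at h0
  exact h0.symm

theorem exists_pair_infix_image (hv : IsImage f w v) {α x y : A}
    (hα : ∀ δ, (f δ).head? = some α) (hy : y ≠ α) (hxy : FactorI v [x, y]) :
    ∃ δ, (∃ i, w i = δ) ∧ [x, y] <:+: f δ := by
  have hf : ∀ δ, f δ ≠ [] := fun δ h => by simpa [h] using hα δ
  obtain ⟨n, hn⟩ := hv.exists_infix_of_factorI hf hxy
  obtain ⟨δ, hδ, hinf⟩ := List.exists_pair_infix_of_infix_flatMap hy (fun δ _ => hα δ) hn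
  obtain ⟨i, -, rfl⟩ := List.mem_map.mp hδ
  exact ⟨w i, ⟨i, rfl⟩, hinf⟩

end IsImage

end Words

theorem new_fragility_general {A : Type*} (f : A → List A) (hf : IsBLSP f)
    (w v : ℕ → A) (hv : IsImage f w v) (a b c β γ : A)
    (hab : a ≠ b) (hac : a ≠ c)
    (hfrag : FragilityAt v [] a b c β γ) :
    f a = [a] ∧ (∃ δ, (∃ i, w i = δ) ∧ [β, b] <:+: f δ) ∧
      (∃ δ, (∃ i, w i = δ) ∧ [γ, c] <:+: f δ) := by
  obtain ⟨α, hα, hstep⟩ := hf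
  have hhead := head?_eq_of_isBLSP hα hstep
  obtain ⟨hpref, hβb, hγc⟩ := hfrag
  obtain rfl : a = α := (hpref 0 (by simp)).trans (hv.head_eq hhead)
  exact ⟨hα, hv.exists_pair_infix_image hhead hab.symm hβb,
    hv.exists_pair_infix_image hhead hac.symm hγc⟩

theorem new_fragility {A : Type*} (f : A → List A) (hf : IsBLSP f)
    (w v : ℕ → A) (hv : IsImage f w v) (a b c β γ : A)
    (hab : a ≠ b) (hbc : b ≠ c) (hac : a ≠ c) (hβγ : β ≠ γ)
    (hfrag : FragilityAt v [] a b c β γ) :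
    f a = [a] ∧ (∃ δ, (∃ i, w i = δ) ∧ [β, b] <:+: f δ) ∧
      (∃ δ, (∃ i, w i = δ) ∧ [γ, c] <:+: f δ) :=
  new_fragility_general f hf w v hv a b c β γ hab hac hfrag
end
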